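/- arXiv:2001.09706 — 10 statements merged into one kernel-verified Lean document; each statement's English description precedes it below -/
import Mathlib

section
/- For a bounded linear operator T on a complex Hilbert space, w(T)^2 ≤ w(T^2) + ‖Re(T)‖^2, where w denotes the numerical radius and Re(T) = (T + T*)/2. -/
open ContinuousLinearMap

/-- Numerical radius of a bounded operator on a complex Hilbert space. -/
noncomputable def numRadius {H : Type*} [NormedAddCommGroup H] [InnerProductSpace ℂ H]
    (T : H →L[ℂ] H) : ℝ :=
  sSup {y : ℝ | ∃ x : H, ‖x‖ = 1 ∧ y = ‖(inner ℂ (T x) x : ℂ)‖}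

section Aux

variable {H : Type*} [NormedAddCommGroup H] [InnerProductSpace ℂ H]

lemma inner_proj_sub (x u v : H) (hx : ‖x‖ = 1) :
    (inner ℂ (u - (inner ℂ x u : ℂ) • x) (v - (inner ℂ x v : ℂ) • x) : ℂ)
      = inner ℂ u v - inner ℂ u x * inner ℂ x v := by
  have hxx : (inner ℂ x x : ℂ) = 1 := by
    rw [inner_self_eq_norm_sq_to_K, hx]; norm_num
  simp [inner_sub_left, inner_sub_right, inner_smul_left, inner_smul_right, hxx,
    inner_conj_symm]
  simp only [hx, Complex.ofReal_one]; ring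

lemma norm_proj_sub_sq (x u : H) (hx : ‖x‖ = 1) :
    ‖u - (inner ℂ x u : ℂ) • x‖ ^ 2 = ‖u‖ ^ 2 - ‖(inner ℂ u x : ℂ)‖ ^ 2 := by
  have habs : ‖(inner ℂ x u : ℂ)‖ = ‖(inner ℂ u x : ℂ)‖ := by
    rw [← inner_conj_symm u x, Complex.norm_conj]
  have h1 : RCLike.re (inner ℂ u ((inner ℂ x u : ℂ) • x) : ℂ)
      = ‖(inner ℂ u x : ℂ)‖ ^ 2 := by
    rw [inner_smul_right, ← inner_conj_symm x u, RCLike.conj_mul]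
    norm_cast
  have h2 : ‖(inner ℂ x u : ℂ) • x‖ ^ 2 = ‖(inner ℂ u x : ℂ)‖ ^ 2 := by
    rw [norm_smul, hx, habs]; ring
  have := @norm_sub_sq ℂ H _ _ _ u ((inner ℂ x u : ℂ) • x)
  rw [this, h1, h2]
  ring

lemma gram_aux (x u v : H) (hx : ‖x‖ = 1) :
    ‖(inner ℂ u v : ℂ) - inner ℂ u x * inner ℂ x v‖ ≤
      Real.sqrt (‖u‖^2 - ‖(inner ℂ u x : ℂ)‖^2) *
      Real.sqrt (‖v‖^2 - ‖(inner ℂ v x : ℂ)‖^2) := by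
  rw [← inner_proj_sub x u v hx]
  calc ‖(inner ℂ (u - (inner ℂ x u : ℂ) • x) (v - (inner ℂ x v : ℂ) • x) : ℂ)‖
      ≤ ‖u - (inner ℂ x u : ℂ) • x‖ * ‖v - (inner ℂ x v : ℂ) • x‖ := by
        exact
          norm_inner_le_norm (𝕜 := ℂ) (u - (inner ℂ x u : ℂ) • x) (v - (inner ℂ x v : ℂ) • x)
    _ = Real.sqrt (‖u‖^2 - ‖(inner ℂ u x : ℂ)‖^2) *
      Real.sqrt (‖v‖^2 - ‖(inner ℂ v x : ℂ)‖^2) := by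
        rw [← norm_proj_sub_sq x u hx, ← norm_proj_sub_sq x v hx,
          Real.sqrt_sq (norm_nonneg _), Real.sqrt_sq (norm_nonneg _)]

lemma numSet_bdd (T : H →L[ℂ] H) :
    BddAbove {y : ℝ | ∃ x : H, ‖x‖ = 1 ∧ y = ‖(inner ℂ (T x) x : ℂ)‖} := by
  refine ⟨‖T‖, ?_⟩
  rintro y ⟨x, hx, rfl⟩
  calc ‖(inner ℂ (T x) x : ℂ)‖ ≤ ‖T x‖ * ‖x‖ := by
        simpa using norm_inner_le_norm (𝕜 := ℂ) (T x) x
    _ ≤ ‖T‖ * ‖x‖ * ‖x‖ := by gcongr; exact T.le_opNorm x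
    _ = ‖T‖ := by rw [hx]; ring

lemma abs_inner_le_numRadius (T : H →L[ℂ] H) {x : H} (hx : ‖x‖ = 1) :
    ‖(inner ℂ (T x) x : ℂ)‖ ≤ numRadius T :=
  le_csSup (numSet_bdd T) ⟨x, hx, rfl⟩

lemma numRadius_nonneg (T : H →L[ℂ] H) : 0 ≤ numRadius T := by
  by_cases h : ∃ x : H, ‖x‖ = 1
  · obtain ⟨x, hx⟩ := h
    exact le_trans (norm_nonneg _) (abs_inner_le_numRadius T hx)
  · have he : {y : ℝ | ∃ x : H, ‖x‖ = 1 ∧ y = ‖(inner ℂ (T x) x : ℂ)‖} = ∅ := by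
      ext y; simp only [Set.mem_setOf_eq, Set.mem_empty_iff_false, iff_false]
      rintro ⟨x, hx, -⟩; exact h ⟨x, hx⟩
    rw [numRadius, he, Real.sSup_empty]

set_option maxHeartbeats 1000000 in
lemma key_pointwise [CompleteSpace H] (T : H →L[ℂ] H) {x : H} (hx : ‖x‖ = 1) :
    ‖(inner ℂ (T x) x : ℂ)‖ ^ 2 ≤
      numRadius (T ^ 2) + ‖(1 / 2 : ℂ) • (T + adjoint T)‖ ^ 2 := by
  set u : H := T x with hu
  set v : H := adjoint T x with hv
  set a : ℂ := inner ℂ (T x) x with ha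
  set w2 : ℝ := numRadius (T ^ 2) with hw2
  set n : ℝ := ‖(1 / 2 : ℂ) • (T + adjoint T)‖ with hn
  set r : ℝ := ‖a‖ ^ 2 with hr
  -- basic identifications
  have hux : (inner ℂ u x : ℂ) = a := rfl
  have hxv : (inner ℂ x v : ℂ) = a := by
    rw [hv, adjoint_inner_right]
  have hvx : ‖(inner ℂ v x : ℂ)‖ = ‖a‖ := by
    rw [← inner_conj_symm v x, Complex.norm_conj, hxv]
  have hsq : ((T ^ 2) x) = T (T x) := by
    simp [pow_two, ContinuousLinearMap.mul_apply]
  have huv : (inner ℂ u v : ℂ) = inner ℂ ((T ^ 2) x) x := by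
    rw [hu, hv, adjoint_inner_right, hsq]
  -- bound on |⟨u,v⟩|
  have huvle : ‖(inner ℂ u v : ℂ)‖ ≤ w2 := by
    rw [huv]; exact abs_inner_le_numRadius _ hx
  -- r ≤ ‖u‖², r ≤ ‖v‖²
  have hru : r ≤ ‖u‖ ^ 2 := by
    have : ‖a‖ ≤ ‖u‖ * ‖x‖ := by
      simpa [ha] using norm_inner_le_norm (𝕜 := ℂ) (T x) x
    rw [hx, mul_one] at this
    nlinarith [norm_nonneg a]
  have hrv : r ≤ ‖v‖ ^ 2 := by
    have h1 : ‖(inner ℂ v x : ℂ)‖ ≤ ‖v‖ * ‖x‖ := by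
      simpa using norm_inner_le_norm (𝕜 := ℂ) v x
    rw [hx, mul_one, hvx] at h1
    nlinarith [norm_nonneg a]
  -- triangle step
  have htri : r ≤ ‖(inner ℂ u v : ℂ)‖ +
      ‖(inner ℂ u v : ℂ) - inner ℂ u x * inner ℂ x v‖ := by
    have h0 : (inner ℂ u x : ℂ) * inner ℂ x v =
        (inner ℂ u v : ℂ) - ((inner ℂ u v : ℂ) - inner ℂ u x * inner ℂ x v) := by ring
    have h1 : r = ‖(inner ℂ u x : ℂ) * inner ℂ x v‖ := by
      rw [hux, hxv, norm_mul, hr]; ring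
    rw [h1, h0]
    simpa using
      norm_sub_le (inner ℂ u v : ℂ) ((inner ℂ u v : ℂ) - inner ℂ u x * inner ℂ x v)
  -- gram step
  have hgram := gram_aux x u v hx
  have habsu : ‖(inner ℂ u x : ℂ)‖ = ‖a‖ := by rw [hux]
  rw [habsu, hvx] at hgram
  -- AM-GM
  have hamgm : Real.sqrt (‖u‖ ^ 2 - ‖a‖ ^ 2) *
      Real.sqrt (‖v‖ ^ 2 - ‖a‖ ^ 2) ≤
      ((‖u‖ ^ 2 - r) + (‖v‖ ^ 2 - r)) / 2 := by
    have h1 := Real.sq_sqrt (by rw [hr] at hru; linarith : (0:ℝ) ≤ ‖u‖ ^ 2 - ‖a‖ ^ 2)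
    have h2 := Real.sq_sqrt (by rw [hr] at hrv; linarith : (0:ℝ) ≤ ‖v‖ ^ 2 - ‖a‖ ^ 2)
    nlinarith [sq_nonneg (Real.sqrt (‖u‖ ^ 2 - ‖a‖ ^ 2) -
      Real.sqrt (‖v‖ ^ 2 - ‖a‖ ^ 2)), Real.sqrt_nonneg (‖u‖ ^ 2 - ‖a‖ ^ 2),
      Real.sqrt_nonneg (‖v‖ ^ 2 - ‖a‖ ^ 2)]
  -- norms bound: ‖u‖² + ‖v‖² ≤ 4n² + 2w2
  have hnormsum : ‖u‖ ^ 2 + ‖v‖ ^ 2 ≤ 4 * n ^ 2 + 2 * w2 := by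
    have hadd := @norm_add_sq ℂ H _ _ _ u v
    have huv2 : u + v = (T + adjoint T) x := by simp [hu, hv]
    have hTn : ‖(T + adjoint T)‖ = 2 * n := by
      rw [hn, norm_smul]
      simp
    have hbound : ‖u + v‖ ≤ 2 * n := by
      rw [huv2, ← hTn]
      calc ‖(T + adjoint T) x‖ ≤ ‖T + adjoint T‖ * ‖x‖ := le_opNorm _ _
        _ = ‖T + adjoint T‖ := by rw [hx, mul_one]
    have hre : -w2 ≤ RCLike.re (inner ℂ u v : ℂ) := by
      have h1 : |(inner ℂ u v : ℂ).re| ≤ ‖(inner ℂ u v : ℂ)‖ := Complex.abs_re_le_norm _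
      have h2 : RCLike.re (inner ℂ u v : ℂ) = (inner ℂ u v : ℂ).re := rfl
      rw [h2]
      cases abs_le.mp h1 with
      | intro hl hr => linarith
    have hnn : (0:ℝ) ≤ ‖u + v‖ := norm_nonneg _
    nlinarith [hbound, hadd, hre, sq_nonneg n]
  -- combine
  have := htri.trans (by linarith [huvle, hgram.trans hamgm] :
    ‖(inner ℂ u v : ℂ)‖ + ‖(inner ℂ u v : ℂ) - inner ℂ u x * inner ℂ x v‖
      ≤ w2 + ((‖u‖ ^ 2 - r) + (‖v‖ ^ 2 - r)) / 2)
  linarith [hnormsum]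


end Aux

theorem numRadius_sq_le_numRadius_sq_add_norm_re_sq
    {H : Type*} [NormedAddCommGroup H] [InnerProductSpace ℂ H] [CompleteSpace H]
    (T : H →L[ℂ] H) :
    (numRadius T) ^ 2 ≤ numRadius (T ^ 2) + ‖(1 / 2 : ℂ) • (T + adjoint T)‖ ^ 2 := by
  have hc0 : 0 ≤ numRadius (T ^ 2) + ‖(1 / 2 : ℂ) • (T + adjoint T)‖ ^ 2 :=
    add_nonneg (numRadius_nonneg _) (sq_nonneg _)
  by_cases h : ∃ x : H, ‖x‖ = 1
  · have hle : numRadius T ≤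
        Real.sqrt (numRadius (T ^ 2) + ‖(1 / 2 : ℂ) • (T + adjoint T)‖ ^ 2) := by
      apply csSup_le
      · obtain ⟨x, hx⟩ := h; exact ⟨_, x, hx, rfl⟩
      · rintro y ⟨x, hx, rfl⟩
        have hk := key_pointwise T hx
        calc ‖(inner ℂ (T x) x : ℂ)‖
            = Real.sqrt (‖(inner ℂ (T x) x : ℂ)‖ ^ 2) :=
              (Real.sqrt_sq (norm_nonneg _)).symm
          _ ≤ Real.sqrt (numRadius (T ^ 2) + ‖(1 / 2 : ℂ) • (T + adjoint T)‖ ^ 2) :=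
              Real.sqrt_le_sqrt hk
    calc (numRadius T) ^ 2 ≤
        Real.sqrt (numRadius (T ^ 2) + ‖(1 / 2 : ℂ) • (T + adjoint T)‖ ^ 2) ^ 2 :=
          pow_le_pow_left₀ (numRadius_nonneg T) hle 2
      _ = _ := Real.sq_sqrt hc0
  · have he : {y : ℝ | ∃ x : H, ‖x‖ = 1 ∧ y = ‖(inner ℂ (T x) x : ℂ)‖} = ∅ := by
      ext y; simp only [Set.mem_setOf_eq, Set.mem_empty_iff_false, iff_false]
      rintro ⟨x, hx, -⟩; exact h ⟨x, hx⟩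
    rw [numRadius, he, Real.sSup_empty]
    simpa using hc0
end

section
/- If T is a bounded linear operator on a complex Hilbert space with T^2 = 0, then w(T) = ‖Re(T)‖ = ‖Im(T)‖. -/
open ContinuousLinearMap

section aux

variable {H : Type*} [NormedAddCommGroup H] [InnerProductSpace ℂ H] [CompleteSpace H]

/-- A self-adjoint operator whose quadratic form is bounded by `M` has norm at most `M`. -/
lemma my_selfadj_norm_le (A : H →L[ℂ] H) (hA : adjoint A = A) {M : ℝ} (hM0 : 0 ≤ M)
    (h : ∀ x : H, ‖x‖ = 1 → ‖(inner ℂ (A x) x : ℂ)‖ ≤ M) : ‖A‖ ≤ M := by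
  have hsym : ∀ a b : H, (inner ℂ (A a) b : ℂ) = starRingEnd ℂ (inner ℂ (A b) a) := by
    intro a b
    rw [← hA, adjoint_inner_left, inner_conj_symm, hA]
  have habs : ∀ u : H, ‖(inner ℂ (A u) u : ℂ)‖ ≤ M * ‖u‖ ^ 2 := by
    intro u
    rcases eq_or_ne u 0 with rfl | hu
    · simp
    · have hn : (0:ℝ) < ‖u‖ := norm_pos_iff.mpr hu
      have h1 := h ((‖u‖⁻¹ : ℂ) • u) (by
        rw [norm_smul]
        simp [norm_inv, hn.ne'])
      rw [map_smul, inner_smul_left, inner_smul_right] at h1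
      simp only [norm_mul, Complex.norm_conj, norm_inv, Complex.norm_real, Real.norm_eq_abs,
        abs_norm, abs_of_pos hn] at h1
      have h2 : ‖u‖⁻¹ * (‖u‖⁻¹ * ‖(inner ℂ (A u) u : ℂ)‖) ≤ M := h1
      calc ‖(inner ℂ (A u) u : ℂ)‖
          = ‖u‖^2 * (‖u‖⁻¹ * (‖u‖⁻¹ * ‖(inner ℂ (A u) u : ℂ)‖)) := by
            field_simp
        _ ≤ ‖u‖^2 * M := mul_le_mul_of_nonneg_left h2 (by positivity)
        _ = M * ‖u‖^2 := by ring
  refine opNorm_le_bound A hM0 (fun x => ?_)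
  rcases eq_or_ne (A x) 0 with hAx | hAx
  · simp [hAx]; positivity
  have hx : x ≠ 0 := by rintro rfl; simp at hAx
  have hxn : (0:ℝ) < ‖x‖ := norm_pos_iff.mpr hx
  have hAxn : (0:ℝ) < ‖A x‖ := norm_pos_iff.mpr hAx
  set y : H := ((‖x‖ / ‖A x‖ : ℝ) : ℂ) • A x with hy
  have hyn : ‖y‖ = ‖x‖ := by
    rw [hy, norm_smul]
    simp only [Complex.norm_real, Real.norm_eq_abs, abs_of_pos (div_pos hxn hAxn)]
    field_simp
  have hAc : (‖A x‖ : ℂ) ≠ 0 := by exact_mod_cast hAxn.ne'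
  have hre : (inner ℂ (A x) y : ℂ).re = ‖x‖ * ‖A x‖ := by
    have heq : (inner ℂ (A x) y : ℂ) = (‖x‖ : ℂ) * (‖A x‖ : ℂ) := by
      rw [hy, inner_smul_right, inner_self_eq_norm_sq_to_K]
      push_cast
      field_simp
      norm_cast
      exact (Complex.ofReal_mul _ _).symm
    rw [heq]
    simp [Complex.mul_re]
  have hpol : 4 * (inner ℂ (A x) y : ℂ).re
      = (inner ℂ (A (x + y)) (x + y) : ℂ).re - (inner ℂ (A (x - y)) (x - y) : ℂ).re := by
    have e1 : (inner ℂ (A y) x : ℂ).re = (inner ℂ (A x) y : ℂ).re := by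
      rw [hsym y x, Complex.conj_re]
    simp only [map_add, map_sub, inner_add_left, inner_add_right, inner_sub_left,
      inner_sub_right, Complex.add_re, Complex.sub_re]
    linarith
  have hb1 : (inner ℂ (A (x + y)) (x + y) : ℂ).re ≤ M * ‖x + y‖^2 :=
    le_trans (Complex.re_le_norm _) (habs _)
  have hb2 : -(M * ‖x - y‖^2) ≤ (inner ℂ (A (x - y)) (x - y) : ℂ).re := by
    have := habs (x - y)
    have h3 := Complex.abs_re_le_norm (inner ℂ (A (x-y)) (x-y) : ℂ)
    have := neg_abs_le ((inner ℂ (A (x-y)) (x-y) : ℂ)).re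
    linarith
  have hpar : ‖x + y‖^2 + ‖x - y‖^2 = 2 * (‖x‖^2 + ‖y‖^2) := by
    have := parallelogram_law_with_norm ℂ x y
    nlinarith [this]
  have key : 4 * (‖x‖ * ‖A x‖) ≤ 4 * (M * ‖x‖^2) := by
    rw [← hre, hpol]
    have : M * ‖x + y‖^2 + M * ‖x - y‖^2 = 4 * (M * ‖x‖^2) := by
      rw [← mul_add, hpar, hyn]; ring
    linarith
  nlinarith [key, hxn]

/-- For `T` with `T² = 0` and `|u| = 1`, the norm of `u•T + conj u • T*` is independent of `u`. -/
lemma my_norm_ReuT (T : H →L[ℂ] H) (hT : T ^ 2 = 0) (u : ℂ) (hu : ‖u‖ = 1) :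
    ‖u • T + (starRingEnd ℂ u) • adjoint T‖ = ‖T + adjoint T‖ := by
  set S := adjoint T with hS
  have hTT : T * T = 0 := by simpa [sq] using hT
  have hSS : S * S = 0 := by
    have : star (T * T) = star (0 : H →L[ℂ] H) := by rw [hTT]
    simpa [star_mul, star_eq_adjoint] using this
  have hstarT : star T = S := star_eq_adjoint T
  have hstarS : star S = T := by rw [hS, star_eq_adjoint, adjoint_adjoint]
  have sq_eq : ∀ v : ℂ, ‖v‖ = 1 →
      (v • T + (starRingEnd ℂ v) • S) * (v • T + (starRingEnd ℂ v) • S) = T * S + S * T := by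
    intro v hv
    have hvc : v * starRingEnd ℂ v = 1 := by
      rw [Complex.mul_conj]
      norm_cast
      rw [Complex.normSq_eq_norm_sq, hv]
      norm_num
    rw [mul_add, add_mul, add_mul]
    rw [smul_mul_smul_comm, smul_mul_smul_comm, smul_mul_smul_comm, smul_mul_smul_comm]
    rw [hTT, hSS, smul_zero, smul_zero, hvc, mul_comm (starRingEnd ℂ v) v, hvc, one_smul, one_smul]
    abel
  have norm_sq : ∀ v : ℂ, ‖v‖ = 1 →
      ‖v • T + (starRingEnd ℂ v) • S‖ * ‖v • T + (starRingEnd ℂ v) • S‖ = ‖T * S + S * T‖ := by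
    intro v hv
    set R := v • T + (starRingEnd ℂ v) • S with hR
    have hRsa : star R = R := by
      rw [hR, star_add, star_smul, star_smul, hstarT, hstarS]
      simp only [RCLike.star_def, Complex.conj_conj]
      abel
    calc ‖R‖ * ‖R‖ = ‖star R * R‖ := (CStarRing.norm_star_mul_self).symm
      _ = ‖R * R‖ := by rw [hRsa]
      _ = ‖T * S + S * T‖ := by rw [hR, sq_eq v hv]
  have h1 := norm_sq u hu
  have h2 := norm_sq 1 (by simp)
  simp only [one_smul, map_one] at h2
  have := h1.trans h2.symm
  exact (mul_self_inj (norm_nonneg _) (norm_nonneg _)).mp this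

end aux

theorem numRadius_eq_norm_re_eq_norm_im_of_sq_eq_zero
    {H : Type*} [NormedAddCommGroup H] [InnerProductSpace ℂ H] [CompleteSpace H]
    (T : H →L[ℂ] H) (hT : T ^ 2 = 0) :
    numRadius T = ‖(1 / 2 : ℂ) • (T + adjoint T)‖ ∧
      numRadius T = ‖((2 * Complex.I)⁻¹ : ℂ) • (T - adjoint T)‖ := by
  set S := adjoint T with hS
  -- the two operators on the right have equal norms
  have him : ‖((2 * Complex.I)⁻¹ : ℂ) • (T - S)‖ = ‖(1 / 2 : ℂ) • (T + S)‖ := by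
    have hc1 : ((2 * Complex.I)⁻¹ : ℂ) = -Complex.I / 2 := by
      refine inv_eq_of_mul_eq_one_right ?_
      ring_nf
      simp [Complex.I_sq]
    have hD : ((2 * Complex.I)⁻¹ : ℂ) • (T - S)
        = (1 / 2 : ℂ) • ((-Complex.I) • T + (starRingEnd ℂ (-Complex.I)) • S) := by
      rw [hc1]
      simp only [map_neg, Complex.conj_I]
      module
    rw [hD, norm_smul, norm_smul, my_norm_ReuT T hT (-Complex.I) (by simp)]
  have hhalf : ‖(1 / 2 : ℂ) • (T + S)‖ = (1/2) * ‖T + S‖ := by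
    rw [norm_smul]; norm_num
  rcases subsingleton_or_nontrivial H with hsub | hnt
  · have hzero : ∀ (x : H), x = 0 := fun x => Subsingleton.elim x 0
    have hset : {y : ℝ | ∃ x : H, ‖x‖ = 1 ∧ y = ‖(inner ℂ (T x) x : ℂ)‖} = ∅ := by
      ext y
      simp only [Set.mem_setOf_eq, Set.mem_empty_iff_false, iff_false, not_exists]
      rintro x ⟨hx, -⟩
      rw [hzero x] at hx
      simp at hx
    have hnum : numRadius T = 0 := by rw [numRadius, hset, Real.sSup_empty]
    have hTS : (1 / 2 : ℂ) • (T + S) = 0 := by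
      ext x; exact Subsingleton.elim _ _
    refine ⟨by rw [hnum, hTS, norm_zero], ?_⟩
    rw [hnum, him, hTS, norm_zero]
  · obtain ⟨x₀, hx₀⟩ := exists_norm_eq H (zero_le_one (α := ℝ))
    set NS := {y : ℝ | ∃ x : H, ‖x‖ = 1 ∧ y = ‖(inner ℂ (T x) x : ℂ)‖} with hNS
    have hbdd : BddAbove NS := by
      refine ⟨‖T‖, ?_⟩
      rintro y ⟨x, hx, rfl⟩
      calc ‖(inner ℂ (T x) x : ℂ)‖ = ‖(inner ℂ (T x) x : ℂ)‖ := rfl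
        _ ≤ ‖T x‖ * ‖x‖ := norm_inner_le_norm _ _
        _ ≤ ‖T‖ * ‖x‖ * ‖x‖ := by
            have := T.le_opNorm x
            nlinarith [norm_nonneg x]
        _ = ‖T‖ := by rw [hx]; ring
    have hmem : ∀ x : H, ‖x‖ = 1 → ‖(inner ℂ (T x) x : ℂ)‖ ≤ numRadius T :=
      fun x hx => le_csSup hbdd ⟨x, hx, rfl⟩
    have hw0 : 0 ≤ numRadius T :=
      le_trans (norm_nonneg _) (hmem x₀ hx₀)
    have hne : NS.Nonempty := ⟨_, x₀, hx₀, rfl⟩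
    -- upper bound : numRadius ≤ ‖Re T‖
    have hub : numRadius T ≤ ‖(1 / 2 : ℂ) • (T + S)‖ := by
      refine csSup_le hne ?_
      rintro y ⟨x, hx, rfl⟩
      set c : ℂ := inner ℂ (T x) x with hc
      rcases eq_or_ne c 0 with hc0 | hc0
      · rw [hc0]; simp
      · set u : ℂ := c / (‖c‖ : ℂ) with hu
        have hcabs : (‖c‖ : ℂ) ≠ 0 := by
          simpa using hc0
        have huabs : ‖u‖ = 1 := by
          rw [hu, norm_div, Complex.norm_real, norm_norm]
          exact div_self (norm_ne_zero_iff.mpr hc0)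
        set R := u • T + (starRingEnd ℂ u) • S with hR
        have hSx : (inner ℂ (S x) x : ℂ) = starRingEnd ℂ c := by
          rw [hS, adjoint_inner_left, hc]
          exact (inner_conj_symm x (T x)).symm
        have hmc : c * starRingEnd ℂ c = ((‖c‖ : ℝ) : ℂ) ^ 2 := by
          rw [Complex.mul_conj]
          norm_cast
          rw [Complex.normSq_eq_norm_sq]
        have hconju : starRingEnd ℂ u = starRingEnd ℂ c / (‖c‖ : ℂ) := by
          rw [hu, map_div₀, Complex.conj_ofReal]
        have hRx : (inner ℂ (R x) x : ℂ) = 2 * (‖c‖ : ℂ) := by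
          rw [hR]
          simp only [add_apply, coe_smul', Pi.smul_apply, inner_add_left, inner_smul_left]
          simp only [Complex.conj_conj]
          rw [hSx, ← hc, hconju, hu]
          field_simp
          linear_combination (2 : ℂ) * hmc
        have habsc : (‖c‖ : ℝ) = (1/2) * ‖((inner ℂ (R x) x : ℂ))‖ := by
          rw [hRx]
          rw [norm_mul, Complex.norm_real, norm_norm]
          norm_num
          ring
        rw [habsc]
        have hRb : ‖((inner ℂ (R x) x : ℂ))‖ ≤ ‖R‖ := by
          calc ‖((inner ℂ (R x) x : ℂ))‖ = ‖(inner ℂ (R x) x : ℂ)‖ := rfl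
            _ ≤ ‖R x‖ * ‖x‖ := norm_inner_le_norm _ _
            _ ≤ ‖R‖ * ‖x‖ * ‖x‖ := by
                have := R.le_opNorm x
                nlinarith [norm_nonneg x]
            _ = ‖R‖ := by rw [hx]; ring
        have hRn : ‖R‖ = ‖T + S‖ := by rw [hR]; exact my_norm_ReuT T hT u huabs
        rw [hhalf]
        rw [hRn] at hRb
        linarith
    -- lower bound : ‖Re T‖ ≤ numRadius
    have hlb : ‖(1 / 2 : ℂ) • (T + S)‖ ≤ numRadius T := by
      have hAsa : adjoint ((1 / 2 : ℂ) • (T + S)) = (1 / 2 : ℂ) • (T + S) := by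
        have hstarT : star T = S := star_eq_adjoint T
        have hstarS : star S = T := by rw [hS, star_eq_adjoint, adjoint_adjoint]
        rw [← star_eq_adjoint, star_smul, star_add, hstarT, hstarS, add_comm S T]
        congr 1
        rw [Complex.star_def, map_div₀, map_one, map_ofNat]
      refine my_selfadj_norm_le _ hAsa hw0 (fun x hx => ?_)
      have : (inner ℂ (((1 / 2 : ℂ) • (T + S)) x) x : ℂ) = ((inner ℂ (T x) x : ℂ).re : ℂ) := by
        simp only [coe_smul', Pi.smul_apply, inner_smul_left, add_apply, inner_add_left]
        have hSx2 : (inner ℂ (S x) x : ℂ) = starRingEnd ℂ (inner ℂ (T x) x : ℂ) := by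
          rw [hS, adjoint_inner_left]
          exact (inner_conj_symm x (T x)).symm
        rw [hSx2, Complex.add_conj, map_div₀, map_one, map_ofNat]
        push_cast
        ring
      rw [this]
      calc ‖(((inner ℂ (T x) x : ℂ).re : ℂ))‖ = |(inner ℂ (T x) x : ℂ).re| :=
            by rw [Complex.norm_real, Real.norm_eq_abs]
        _ ≤ ‖((inner ℂ (T x) x : ℂ))‖ := Complex.abs_re_le_norm _
        _ ≤ numRadius T := hmem x hx
    exact ⟨le_antisymm hub hlb, by rw [him]; exact le_antisymm hub hlb⟩
end

section
/- If T is a bounded linear operator on a complex Hilbert space with T^2 = 0, then the Crawford numbers of Re(T) and Im(T) both vanish: m(Re(T)) = m(Im(T)) = 0, where m(S) = inf{|⟨Sx,x⟩| : ‖x‖=1}. -/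
open ContinuousLinearMap

/-- Crawford number of a bounded operator on a complex Hilbert space. -/
noncomputable def crawford {H : Type*} [NormedAddCommGroup H] [InnerProductSpace ℂ H]
    (T : H →L[ℂ] H) : ℝ :=
  sInf {y : ℝ | ∃ x : H, ‖x‖ = 1 ∧ y = ‖(inner ℂ (T x) x : ℂ)‖}

lemma crawford_eq_zero_aux {H : Type*} [NormedAddCommGroup H] [InnerProductSpace ℂ H]
    (S : H →L[ℂ] H) (y : H) (hy : ‖y‖ = 1) (h : (inner ℂ (S y) y : ℂ) = 0) :
    crawford S = 0 := by
  have h0 : (0:ℝ) ∈ {z : ℝ | ∃ x : H, ‖x‖ = 1 ∧ z = ‖(inner ℂ (S x) x : ℂ)‖} :=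
    ⟨y, hy, by simp [h]⟩
  refine le_antisymm (csInf_le ⟨0, ?_⟩ h0) (le_csInf ⟨0, h0⟩ ?_)
  · rintro r ⟨x, hx, rfl⟩
    exact norm_nonneg _
  · rintro r ⟨x, hx, rfl⟩
    exact norm_nonneg _

lemma crawford_of_subsingleton {H : Type*} [NormedAddCommGroup H] [InnerProductSpace ℂ H]
    [Subsingleton H] (S : H →L[ℂ] H) : crawford S = 0 := by
  have : {z : ℝ | ∃ x : H, ‖x‖ = 1 ∧ z = ‖(inner ℂ (S x) x : ℂ)‖} = ∅ := by
    ext z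
    simp only [Set.mem_setOf_eq, Set.mem_empty_iff_false, iff_false, not_exists]
    rintro x ⟨hx, -⟩
    have : x = 0 := Subsingleton.elim x 0
    simp [this] at hx
  simp [crawford, this, Real.sInf_empty]

theorem crawford_re_eq_zero_and_crawford_im_eq_zero_of_sq_eq_zero
    {H : Type*} [NormedAddCommGroup H] [InnerProductSpace ℂ H] [CompleteSpace H]
    (T : H →L[ℂ] H) (hT : T ^ 2 = 0) :
    crawford ((1 / 2 : ℂ) • (T + adjoint T)) = 0 ∧
      crawford (((2 * Complex.I)⁻¹ : ℂ) • (T - adjoint T)) = 0 := by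
  rcases subsingleton_or_nontrivial H with hsub | hnt
  · exact ⟨crawford_of_subsingleton _, crawford_of_subsingleton _⟩
  · -- find a unit vector y with T y = 0
    obtain ⟨y, hy, hTy⟩ : ∃ y : H, ‖y‖ = 1 ∧ T y = 0 := by
      by_cases hT0 : T = 0
      · obtain ⟨x, hx⟩ := exists_ne (0 : H)
        refine ⟨‖x‖⁻¹ • x, ?_, by simp [hT0]⟩
        simp [norm_smul, norm_ne_zero_iff.mpr hx,
          inv_mul_cancel₀ (norm_ne_zero_iff.mpr hx)]
      · obtain ⟨x, hx⟩ : ∃ x, T x ≠ 0 := by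
          by_contra h
          push_neg at h
          exact hT0 (ContinuousLinearMap.ext fun x => h x)
        refine ⟨‖T x‖⁻¹ • T x, ?_, ?_⟩
        · simp [norm_smul, inv_mul_cancel₀ (norm_ne_zero_iff.mpr hx)]
        · have h2 : T (T x) = 0 := by
            have := congrArg (fun S : H →L[ℂ] H => S x) hT
            simpa [pow_two, ContinuousLinearMap.mul_apply] using this
          simp [map_smul, h2]
    have hA : (inner ℂ ((adjoint T) y) y : ℂ) = 0 := by
      rw [adjoint_inner_left]
      simp [hTy]
    constructor
    · refine crawford_eq_zero_aux _ y hy ?_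
      simp [ContinuousLinearMap.add_apply, inner_add_left, inner_smul_left, hTy, hA]
    · refine crawford_eq_zero_aux _ y hy ?_
      simp [ContinuousLinearMap.sub_apply, inner_sub_left, inner_smul_left, hTy, hA]
end

section
/- Every zero λ of the monic polynomial p(z) = z^n + a_{n-1}z^{n-1} + … + a₀ (n ≥ 2) satisfies |λ| ≤ √(|a_{n-1}|² + (α/2)(|a_{n-1}| + α/2)) + √(cos²(π/n) + (1/2)(cos(π/n) + 1/2)), where α = √(Σ_{r=0}^{n-2}|a_r|²). -/
open Finset


lemma amgm_div (p q a b : ℝ) (hp : 0 < p) (hq : 0 < q) :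
    a * b ≤ q / (2 * p) * a ^ 2 + p / (2 * q) * b ^ 2 := by
  rw [← sub_nonneg]
  have h1 : q / (2 * p) * a ^ 2 + p / (2 * q) * b ^ 2 - a * b
      = (q * a - p * b) ^ 2 / (2 * p * q) := by
    field_simp
    ring
  rw [h1]
  positivity

lemma path_sum_le (m : ℕ) (y : ℕ → ℝ) :
    ∑ k ∈ range m, y k * y (k + 1)
      ≤ Real.cos (Real.pi / (m + 2)) * ∑ k ∈ range (m + 1), y k ^ 2 := by
  set θ := Real.pi / (m + 2) with hθ
  set c := Real.cos θ with hc
  set u : ℕ → ℝ := fun k => Real.sin ((k + 1) * θ) with hu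
  have hθpos : 0 < θ := by rw [hθ]; positivity
  have hupos : ∀ k : ℕ, k < m + 1 → 0 < u k := by
    intro k hk
    apply Real.sin_pos_of_pos_of_lt_pi
    · positivity
    · rw [hθ]
      have h1 : ((k : ℝ) + 1) < (m : ℝ) + 2 := by
        have : (k : ℝ) < (m : ℝ) + 1 := by exact_mod_cast hk
        linarith
      calc ((k : ℝ) + 1) * (Real.pi / (↑m + 2)) < ((m : ℝ) + 2) * (Real.pi / (↑m + 2)) := by
            apply mul_lt_mul_of_pos_right h1
            positivity
        _ = Real.pi := by field_simp
  have hrec : ∀ k : ℕ, u (k + 2) + u k = 2 * c * u (k + 1) := by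
    intro k
    simp only [hu, hc]
    have e1 : ((k : ℝ) + 2 + 1) * θ = ((k : ℝ) + 1 + 1) * θ + θ := by ring
    have e2 : ((k : ℝ) + 1) * θ = ((k : ℝ) + 1 + 1) * θ - θ := by ring
    push_cast
    rw [e1, e2, Real.sin_add, Real.sin_sub]
    ring
  have hbase : u 1 = 2 * c * u 0 := by
    simp only [hu, hc]
    norm_num
    rw [show (2 : ℝ) * θ = θ + θ by ring, Real.sin_add]
    ring
  have hlast : u (m + 1) = 0 := by
    simp only [hu]
    have : ((m : ℕ) + 1 + 1 : ℝ) * θ = Real.pi := by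
      rw [hθ]
      field_simp
      ring
    push_cast at this ⊢
    rw [this, Real.sin_pi]
  have claim : ∀ i : ℕ, i ≤ m →
      ∑ k ∈ range i, y k * y (k + 1)
        ≤ c * ∑ k ∈ range (i + 1), y k ^ 2 - u (i + 1) / (2 * u i) * y i ^ 2 := by
    intro i
    induction i with
    | zero =>
      intro _
      have hu0 : u 0 ≠ 0 := ne_of_gt (hupos 0 (by omega))
      simp only [sum_range_zero, sum_range_one]
      rw [hbase]
      have : 2 * c * u 0 / (2 * u 0) = c := by field_simp
      rw [this]
      simp
    | succ i ih =>
      intro hi1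
      have hi : i ≤ m := by omega
      have h1 := ih hi
      have hui : 0 < u i := hupos i (by omega)
      have hui1 : 0 < u (i + 1) := hupos (i + 1) (by omega)
      have hrec_i := hrec i
      have heq : u i / (2 * u (i + 1)) = c - u (i + 2) / (2 * u (i + 1)) := by
        field_simp
        linarith
      have hkey : y i * y (i + 1)
          ≤ u (i + 1) / (2 * u i) * y i ^ 2 + u i / (2 * u (i + 1)) * y (i + 1) ^ 2 :=
        amgm_div (u i) (u (i + 1)) (y i) (y (i + 1)) hui hui1
      rw [heq] at hkey
      rw [Finset.sum_range_succ (f := fun k => y k * y (k + 1)) (n := i)]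
      rw [Finset.sum_range_succ (f := fun k => y k ^ 2) (n := i + 1)]
      have h2 : u (i + 2) = u (i + 1 + 1) := by norm_num
      rw [h2] at hkey
      linarith
  have hfin := claim m le_rfl
  rw [hlast] at hfin
  simp only [zero_div, zero_mul, sub_zero] at hfin
  exact hfin

lemma key_scalar (A B u v : ℝ) (hA : 0 ≤ A) (hB : 0 ≤ B) :
    A * u ^ 2 + B * u * v ≤ Real.sqrt (A ^ 2 + B / 2 * (A + B / 2)) * (u ^ 2 + v ^ 2) := by
  set R := Real.sqrt (A ^ 2 + B ^ 2) with hR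
  have hR0 : 0 ≤ R := Real.sqrt_nonneg _
  have hR2 : R ^ 2 = A ^ 2 + B ^ 2 := Real.sq_sqrt (by positivity)
  have hRle : R ≤ A + B := by
    rw [hR, show A ^ 2 + B ^ 2 = (A + B) ^ 2 - 2 * A * B by ring]
    calc Real.sqrt ((A + B) ^ 2 - 2 * A * B) ≤ Real.sqrt ((A + B) ^ 2) := by
          apply Real.sqrt_le_sqrt; nlinarith [mul_nonneg hA hB]
      _ = A + B := Real.sqrt_sq (by linarith)
  have step1 : A * u ^ 2 + B * u * v ≤ (A + R) / 2 * (u ^ 2 + v ^ 2) := by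
    have hcs : (A * (u ^ 2 - v ^ 2) + 2 * B * u * v) ^ 2 ≤ (R * (u ^ 2 + v ^ 2)) ^ 2 := by
      have : (R * (u ^ 2 + v ^ 2)) ^ 2 = (A ^ 2 + B ^ 2) * (u ^ 2 + v ^ 2) ^ 2 := by
        rw [mul_pow, hR2]
      rw [this]
      nlinarith [sq_nonneg (2 * A * u * v - B * (u ^ 2 - v ^ 2))]
    have h2 : A * (u ^ 2 - v ^ 2) + 2 * B * u * v ≤ R * (u ^ 2 + v ^ 2) := by
      have habs : A * (u ^ 2 - v ^ 2) + 2 * B * u * v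
          ≤ |A * (u ^ 2 - v ^ 2) + 2 * B * u * v| := le_abs_self _
      have h3 : |A * (u ^ 2 - v ^ 2) + 2 * B * u * v| ≤ R * (u ^ 2 + v ^ 2) := by
        have := Real.sqrt_le_sqrt hcs
        rwa [Real.sqrt_sq_eq_abs, Real.sqrt_sq (by positivity)] at this
      linarith
    linarith
  have step2 : (A + R) / 2 ≤ Real.sqrt (A ^ 2 + B / 2 * (A + B / 2)) := by
    rw [Real.le_sqrt (by positivity) (by positivity)]
    nlinarith [mul_le_mul_of_nonneg_left hRle hA]
  calc A * u ^ 2 + B * u * v ≤ (A + R) / 2 * (u ^ 2 + v ^ 2) := step1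
    _ ≤ Real.sqrt (A ^ 2 + B / 2 * (A + B / 2)) * (u ^ 2 + v ^ 2) :=
        mul_le_mul_of_nonneg_right step2 (by positivity)

theorem zero_bound_R3 (n : ℕ) (hn : 2 ≤ n) (a : ℕ → ℂ) (lam : ℂ)
    (h : lam ^ n + ∑ r ∈ range n, a r * lam ^ r = 0) :
    ‖lam‖ ≤
      Real.sqrt (‖a (n - 1)‖ ^ 2 +
        (Real.sqrt (∑ r ∈ range (n - 1), ‖a r‖ ^ 2) / 2) *
          (‖a (n - 1)‖ +
            Real.sqrt (∑ r ∈ range (n - 1), ‖a r‖ ^ 2) / 2)) +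
      Real.sqrt (Real.cos (Real.pi / n) ^ 2 +
        (1 / 2) * (Real.cos (Real.pi / n) + 1 / 2)) := by
  obtain ⟨m, rfl⟩ : ∃ m, n = m + 2 := ⟨n - 2, by omega⟩
  simp only [show m + 2 - 1 = m + 1 from rfl]
  rw [show ((m + 2 : ℕ) : ℝ) = (m : ℝ) + 2 by push_cast; ring]
  set x := ‖lam‖ with hxdef
  have hx0 : 0 ≤ x := norm_nonneg _
  have alg : lam * ∑ k ∈ range (m + 2), (lam * (starRingEnd ℂ) lam) ^ k
      = (∑ k ∈ range (m + 1), lam * (lam * (starRingEnd ℂ) lam) ^ k)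
        + ((starRingEnd ℂ) lam) ^ (m + 1) * (lam ^ (m + 2) + ∑ r ∈ range (m + 2), a r * lam ^ r)
        - ((starRingEnd ℂ) lam) ^ (m + 1) * ∑ r ∈ range (m + 2), a r * lam ^ r := by
    rw [Finset.sum_range_succ, ← Finset.mul_sum]
    ring
  rw [h, mul_zero, add_zero] at alg
  have hconj : lam * (starRingEnd ℂ) lam = ((x : ℝ) : ℂ) ^ 2 := by
    rw [Complex.mul_conj, ← Complex.sq_norm]
    push_cast
    rfl
  rw [hconj] at alg
  have habs : x * ∑ k ∈ range (m + 2), (x ^ 2) ^ k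
      ≤ (∑ k ∈ range (m + 1), x * (x ^ 2) ^ k)
        + x ^ (m + 1) * ∑ r ∈ range (m + 2), ‖a r‖ * x ^ r := by
    have e1 : ‖lam * ∑ k ∈ range (m + 2), (((x : ℝ) : ℂ) ^ 2) ^ k‖
        = x * ∑ k ∈ range (m + 2), (x ^ 2) ^ k := by
      rw [norm_mul]
      congr 1
      rw [show ∑ k ∈ range (m + 2), (((x : ℝ) : ℂ) ^ 2) ^ k
          = ((∑ k ∈ range (m + 2), (x ^ 2) ^ k : ℝ) : ℂ) by push_cast; ring]
      rw [Complex.norm_real, Real.norm_eq_abs, abs_of_nonneg (Finset.sum_nonneg fun k _ => by positivity)]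
    calc x * ∑ k ∈ range (m + 2), (x ^ 2) ^ k
        = ‖lam * ∑ k ∈ range (m + 2), (((x : ℝ) : ℂ) ^ 2) ^ k‖ := e1.symm
      _ = ‖(∑ k ∈ range (m + 1), lam * (((x : ℝ) : ℂ) ^ 2) ^ k)
            - ((starRingEnd ℂ) lam) ^ (m + 1) * ∑ r ∈ range (m + 2), a r * lam ^ r‖ := by
          rw [alg]
      _ ≤ ‖∑ k ∈ range (m + 1), lam * (((x : ℝ) : ℂ) ^ 2) ^ k‖
            + ‖((starRingEnd ℂ) lam) ^ (m + 1) * ∑ r ∈ range (m + 2), a r * lam ^ r‖ := by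
          rw [sub_eq_add_neg]
          refine (norm_add_le _ _).trans ?_
          rw [norm_neg]
      _ ≤ (∑ k ∈ range (m + 1), x * (x ^ 2) ^ k)
            + x ^ (m + 1) * ∑ r ∈ range (m + 2), ‖a r‖ * x ^ r := by
          gcongr ?_ + ?_
          · refine (norm_sum_le _ _).trans ?_
            apply le_of_eq
            apply Finset.sum_congr rfl
            intro k _
            rw [norm_mul, norm_pow, norm_pow, Complex.norm_real, Real.norm_eq_abs, abs_of_nonneg hx0]
          · rw [norm_mul, norm_pow, Complex.norm_conj]
            gcongr
            refine (norm_sum_le _ _).trans ?_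
            apply le_of_eq
            apply Finset.sum_congr rfl
            intro r _
            rw [norm_mul, norm_pow]

  set S := ∑ k ∈ range (m + 1), (x ^ 2) ^ k with hS
  have hS0 : 0 ≤ S := Finset.sum_nonneg fun k _ => by positivity
  have hsqS : Real.sqrt S ^ 2 = S := Real.sq_sqrt hS0
  set T := x ^ (m + 1) with hT
  have hT0 : 0 ≤ T := pow_nonneg hx0 _
  have hs_eq : ∑ k ∈ range (m + 2), (x ^ 2) ^ k = S + T ^ 2 := by
    rw [Finset.sum_range_succ, hT, pow_right_comm]
  have hS1 : 1 ≤ S := by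
    have := Finset.single_le_sum (f := fun k => (x ^ 2) ^ k)
      (fun k _ => by positivity) (Finset.mem_range.mpr (Nat.succ_pos m))
    simpa using this
  set α := Real.sqrt (∑ r ∈ range (m + 1), ‖a r‖ ^ 2) with hα
  have hα0 : 0 ≤ α := Real.sqrt_nonneg _
  set A := ‖a (m + 1)‖ with hA
  have hA0 : 0 ≤ A := norm_nonneg _
  set c := Real.cos (Real.pi / ((m : ℝ) + 2)) with hc
  have hc0 : 0 ≤ c := by
    rw [hc]
    apply Real.cos_nonneg_of_mem_Icc
    constructor
    · have := Real.pi_pos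
      have h2 : 0 ≤ Real.pi / ((m : ℝ) + 2) := by positivity
      linarith
    · apply div_le_div_of_nonneg_left Real.pi_pos.le (by norm_num)
      · linarith [Nat.cast_nonneg (α := ℝ) m]
  have hCS : ∑ r ∈ range (m + 1), ‖a r‖ * x ^ r ≤ α * Real.sqrt S := by
    have h1 := Finset.sum_mul_sq_le_sq_mul_sq (range (m + 1))
      (fun r => ‖a r‖) (fun r => x ^ r)
    have h2 : ∑ r ∈ range (m + 1), (x ^ r) ^ 2 = S := by
      apply Finset.sum_congr rfl
      intro k _
      rw [pow_right_comm]
    simp only [h2] at h1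
    have h3 : 0 ≤ ∑ r ∈ range (m + 1), ‖a r‖ * x ^ r :=
      Finset.sum_nonneg fun r _ => mul_nonneg (norm_nonneg _) (pow_nonneg hx0 _)
    calc ∑ r ∈ range (m + 1), ‖a r‖ * x ^ r
        = Real.sqrt ((∑ r ∈ range (m + 1), ‖a r‖ * x ^ r) ^ 2) :=
          (Real.sqrt_sq h3).symm
      _ ≤ Real.sqrt ((∑ r ∈ range (m + 1), ‖a r‖ ^ 2) * S) :=
          Real.sqrt_le_sqrt h1
      _ = α * Real.sqrt S := Real.sqrt_mul (Finset.sum_nonneg fun r _ => sq_nonneg _) S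
  have hterm : ∀ k : ℕ, x * (x ^ 2) ^ k = x ^ k * x ^ (k + 1) := by
    intro k
    rw [← pow_mul, ← pow_add, ← pow_succ']
    congr 1
    omega
  have hP : ∑ k ∈ range (m + 1), x * (x ^ 2) ^ k ≤ c * S + Real.sqrt S * T := by
    rw [Finset.sum_range_succ]
    simp only [hterm]
    have h1 := path_sum_le m (fun k => x ^ k)
    have h2 : ∑ k ∈ range (m + 1), ((fun k => x ^ k) k) ^ 2 = S := by
      apply Finset.sum_congr rfl
      intro k _
      exact pow_right_comm x k 2
    rw [h2] at h1
    have h3 : x ^ m ≤ Real.sqrt S := by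
      have h4 : (x ^ m) ^ 2 ≤ S := by
        rw [pow_right_comm]
        exact Finset.single_le_sum (f := fun k => (x ^ 2) ^ k)
          (fun k _ => by positivity) (Finset.self_mem_range_succ m)
      calc x ^ m = Real.sqrt ((x ^ m) ^ 2) := (Real.sqrt_sq (pow_nonneg hx0 m)).symm
        _ ≤ Real.sqrt S := Real.sqrt_le_sqrt h4
    have h5 : x ^ m * x ^ (m + 1) ≤ Real.sqrt S * T := by
      rw [hT]
      exact mul_le_mul_of_nonneg_right h3 (pow_nonneg hx0 _)
    have hcc : Real.cos (Real.pi / ((m : ℝ) + 2)) = c := rfl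
    linarith [h1, h5]
  have k1 : c * Real.sqrt S ^ 2 + 1 * Real.sqrt S * T
      ≤ Real.sqrt (c ^ 2 + 1 / 2 * (c + 1 / 2)) * (Real.sqrt S ^ 2 + T ^ 2) :=
    key_scalar c 1 (Real.sqrt S) T hc0 one_pos.le
  have k2 : A * T ^ 2 + α * T * Real.sqrt S
      ≤ Real.sqrt (A ^ 2 + α / 2 * (A + α / 2)) * (T ^ 2 + Real.sqrt S ^ 2) :=
    key_scalar A α T (Real.sqrt S) hA0 hα0
  rw [hsqS] at k1 k2
  have hQ : ∑ r ∈ range (m + 2), ‖a r‖ * x ^ r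
      ≤ α * Real.sqrt S + A * T := by
    rw [Finset.sum_range_succ]
    have : ‖a (m + 1)‖ * x ^ (m + 1) = A * T := rfl
    linarith [hCS]
  have hxmul : x * (S + T ^ 2)
      ≤ (Real.sqrt (A ^ 2 + α / 2 * (A + α / 2))
          + Real.sqrt (c ^ 2 + 1 / 2 * (c + 1 / 2))) * (S + T ^ 2) := by
    have h6 : T * ∑ r ∈ range (m + 2), ‖a r‖ * x ^ r
        ≤ T * (α * Real.sqrt S + A * T) := mul_le_mul_of_nonneg_left hQ hT0
    rw [hs_eq] at habs
    nlinarith [habs, hP, k1, k2, h6]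
  have hspos : (0 : ℝ) < S + T ^ 2 := by nlinarith [sq_nonneg T]
  have hfinal : x ≤ Real.sqrt (A ^ 2 + α / 2 * (A + α / 2))
      + Real.sqrt (c ^ 2 + 1 / 2 * (c + 1 / 2)) :=
    le_of_mul_le_mul_right (by linarith [hxmul]) hspos
  exact hfinal
end

section
/- Every zero λ of the monic polynomial p(z) = z^n + a_{n-1}z^{n-1} + … + a₀ (n ≥ 2) satisfies |λ| ≤ √(2|a_{n-1}|² + (1/2)(α + β²)) + √(2cos²(π/n) + 1/2), where α = √(Σ_{r=0}^{n-2}|a_r a_{n-1}|²) and β = √(Σ_{r=0}^{n-2}|a_r|²). -/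
set_option maxHeartbeats 2000000

open Finset

private theorem zbr4_key3 (u s c b r : ℝ) (hu : 0 ≤ u) (hc : 0 ≤ c) (hb : 0 ≤ b) (hs : 1 ≤ s)
    (hr : r^2 = 2) (hr1 : (7:ℝ)/5 ≤ r)
    (hcu : r*c ≤ u) (hbu : b ≤ r*u) :
    b^2 ≤ (u+s-c)^2 * ((u+s)^2 - 1) := by
  have hr0 : (0:ℝ) < r := by linarith
  have hkc : 2*c ≤ r*u := by nlinarith [mul_le_mul_of_nonneg_left hcu hr0.le]
  have h1 : b^2 ≤ 2*u^2 := by nlinarith [mul_le_mul_of_nonneg_left hbu hr0.le, mul_nonneg hu hb]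
  have hk1 : (1:ℝ)/4 ≤ 1 - r/2 := by nlinarith
  have h2 : 2*u^2 ≤ ((1-r/2)*u + 1)^2 * (u^2 + 2*u) := by
    nlinarith [sq_nonneg ((1-r/2)*u - 1), mul_nonneg (mul_nonneg hu hu) hu,
      sq_nonneg u, mul_nonneg hu (sq_nonneg ((1-r/2)*u - 1))]
  have hcle : c ≤ (r/2)*u := by nlinarith
  have hq : (0:ℝ) ≤ (1-r/2)*u + 1 := by nlinarith
  have hq2 : (1-r/2)*u + 1 ≤ u + 1 - c := by nlinarith
  have h3 : ((1-r/2)*u + 1)^2 * (u^2 + 2*u) ≤ (u+1-c)^2 * (u^2+2*u) :=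
    mul_le_mul_of_nonneg_right (pow_le_pow_left₀ hq hq2 2) (by positivity)
  have h4 : (u+1-c)^2 * (u^2+2*u) ≤ (u+s-c)^2 * ((u+s)^2 - 1) := by
    have e1 : 0 ≤ u + 1 - c := by nlinarith
    have e2 : u + 1 - c ≤ u + s - c := by linarith
    have e3 : u^2 + 2*u ≤ (u+s)^2 - 1 := by nlinarith
    exact mul_le_mul (pow_le_pow_left₀ e1 e2 2) e3 (by positivity) (sq_nonneg _)
  linarith

private theorem zbr4_key2 (u s c b B : ℝ) (hu : 0 ≤ u) (hc : 0 ≤ c)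
    (hs : s^2 = 1/2) (hs1 : (7:ℝ)/10 ≤ s) (hs2 : s ≤ 71/100)
    (hcu : 2*s*c ≤ u) (hbu : b ≤ 2*s*u)
    (hB : u + s < B) (hq : B^2 ≤ c*B + b) : False := by
  have hcsu : c ≤ s*u := by nlinarith
  have hE : 0 ≤ (u+s)^2 - c*(u+s) - b := by
    nlinarith [mul_nonneg (sub_nonneg.2 hcsu) hu, sq_nonneg (u-1), mul_nonneg hu hc]
  have hBc : 0 < B + (u+s) - c := by nlinarith
  nlinarith [mul_pos (sub_pos.2 hB) hBc]

private theorem zbr4_cs (m : ℕ) (a : ℕ → ℂ) (lam : ℂ) :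
    ‖∑ r ∈ range m, a r * lam ^ r‖ ≤
      Real.sqrt (∑ r ∈ range m, ‖a r‖ ^ 2) *
      Real.sqrt (∑ r ∈ range m, ((‖lam‖) ^ r) ^ 2) := by
  have h1 : ‖∑ r ∈ range m, a r * lam ^ r‖ ≤
      ∑ r ∈ range m, ‖a r‖ * (‖lam‖) ^ r := by
    refine (norm_sum_le _ _).trans (le_of_eq ?_)
    simp [norm_mul, norm_pow]
  have h2 := sum_mul_sq_le_sq_mul_sq (range m) (fun r => ‖a r‖)
    (fun r => (‖lam‖) ^ r)
  have h3 : ∑ r ∈ range m, ‖a r‖ * (‖lam‖) ^ r ≤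
      Real.sqrt ((∑ r ∈ range m, ‖a r‖ ^ 2) *
        (∑ r ∈ range m, ((‖lam‖) ^ r) ^ 2)) := by
    have hx : 0 ≤ ∑ r ∈ range m, ‖a r‖ * (‖lam‖) ^ r :=
      Finset.sum_nonneg fun r _ => mul_nonneg (norm_nonneg _) (pow_nonneg (norm_nonneg _) _)
    have hy : 0 ≤ (∑ r ∈ range m, ‖a r‖ ^ 2) *
        (∑ r ∈ range m, ((‖lam‖) ^ r) ^ 2) :=
      mul_nonneg (Finset.sum_nonneg fun r _ => sq_nonneg _) (Finset.sum_nonneg fun r _ => sq_nonneg _)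
    exact (Real.le_sqrt hx hy).2 h2
  calc _ ≤ _ := h1
    _ ≤ _ := h3
    _ = _ := Real.sqrt_mul (Finset.sum_nonneg fun r _ => sq_nonneg _) _

theorem zero_bound_R4 (n : ℕ) (hn : 2 ≤ n) (a : ℕ → ℂ) (lam : ℂ)
    (h : lam ^ n + ∑ r ∈ range n, a r * lam ^ r = 0) :
    ‖lam‖ ≤
      Real.sqrt (2 * ‖a (n - 1)‖ ^ 2 +
        (1 / 2) * (Real.sqrt (∑ r ∈ range (n - 1), ‖a r * a (n - 1)‖ ^ 2) +
          Real.sqrt (∑ r ∈ range (n - 1), ‖a r‖ ^ 2) ^ 2)) +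
      Real.sqrt (2 * Real.cos (Real.pi / n) ^ 2 + 1 / 2) := by
  obtain ⟨m, rfl⟩ : ∃ m, n = m + 1 := ⟨n - 1, by omega⟩
  have hm : 1 ≤ m := by omega
  simp only [Nat.add_sub_cancel]
  set B := ‖lam‖ with hBdef
  set c := ‖a m‖ with hcdef
  set S := ∑ r ∈ range m, ‖a r‖ ^ 2 with hSdef
  have hS : 0 ≤ S := Finset.sum_nonneg fun r _ => sq_nonneg _
  set β := Real.sqrt S with hβdef
  have hβ0 : 0 ≤ β := Real.sqrt_nonneg _
  have hβ2 : β ^ 2 = S := Real.sq_sqrt hS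
  have hc0 : 0 ≤ c := norm_nonneg _
  have hB0 : 0 ≤ B := norm_nonneg _
  -- rewrite the α sum as c * β
  have hα : Real.sqrt (∑ r ∈ range m, ‖a r * a m‖ ^ 2) = c * β := by
    have e : ∑ r ∈ range m, ‖a r * a m‖ ^ 2 = c ^ 2 * S := by
      rw [hSdef, Finset.mul_sum]
      refine Finset.sum_congr rfl fun r _ => ?_
      rw [norm_mul]; ring
    rw [e, Real.sqrt_mul (sq_nonneg c), Real.sqrt_sq hc0, hβdef]
  rw [hα]
  set u := Real.sqrt (2 * c ^ 2 + 1 / 2 * (c * β + β ^ 2)) with hudef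
  have hu0 : 0 ≤ u := Real.sqrt_nonneg _
  have hu2 : u ^ 2 = 2 * c ^ 2 + 1 / 2 * (c * β + β ^ 2) :=
    Real.sq_sqrt (add_nonneg (by positivity)
      (mul_nonneg (by norm_num) (add_nonneg (mul_nonneg hc0 hβ0) (sq_nonneg β))))
  set t2 := Real.sqrt (2 * Real.cos (Real.pi / (↑(m+1) : ℝ)) ^ 2 + 1 / 2) with ht2def
  have ht20 : 0 ≤ t2 := Real.sqrt_nonneg _
  by_contra hcon
  push_neg at hcon
  clear_value u t2
  -- basic facts about u
  have hcu : Real.sqrt 2 * c ≤ u := by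
    have : (Real.sqrt 2 * c) ^ 2 ≤ u ^ 2 := by
      rw [mul_pow, Real.sq_sqrt (by norm_num : (0:ℝ) ≤ 2), hu2]
      nlinarith [mul_nonneg hc0 hβ0, sq_nonneg β]
    exact le_of_pow_le_pow_left₀ two_ne_zero hu0 this
  have hbu : β ≤ Real.sqrt 2 * u := by
    have : β ^ 2 ≤ (Real.sqrt 2 * u) ^ 2 := by
      rw [mul_pow, Real.sq_sqrt (by norm_num : (0:ℝ) ≤ 2)]
      nlinarith [mul_nonneg hc0 hβ0, sq_nonneg c]
    exact le_of_pow_le_pow_left₀ two_ne_zero (mul_nonneg (Real.sqrt_nonneg 2) hu0) this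
  have hr2 : (Real.sqrt 2) ^ 2 = 2 := Real.sq_sqrt (by norm_num)
  have hr1 : (7:ℝ)/5 ≤ Real.sqrt 2 := by
    rw [show (7:ℝ)/5 = Real.sqrt ((7/5)^2) from (Real.sqrt_sq (by norm_num)).symm]
    exact Real.sqrt_le_sqrt (by norm_num)
  have hcB : c ≤ B := by nlinarith
  rcases eq_or_lt_of_le hm with hm1 | hm2
  · -- n = 2 case
    obtain rfl : m = 1 := hm1.symm
    have ht2sq : t2 ^ 2 = 1/2 := by
      rw [ht2def, Real.sq_sqrt]
      · norm_num [Real.cos_pi_div_two]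
      · positivity
    have hs1 : (7:ℝ)/10 ≤ t2 := by nlinarith
    have hs2 : t2 ≤ 71/100 := by nlinarith
    have hβa0 : β = ‖a 0‖ := by
      rw [hβdef, hSdef]
      simp [Real.sqrt_sq (norm_nonneg _)]
    have hq : B ^ 2 ≤ c * B + β := by
      have he : lam ^ 2 = -(a 0 + a 1 * lam) := by
        have := h
        simp [Finset.sum_range_succ] at this
        linear_combination this
      calc B ^ 2 = ‖lam ^ 2‖ := by rw [norm_pow]
        _ = ‖a 0 + a 1 * lam‖ := by rw [he, norm_neg]
        _ ≤ ‖a 0‖ + ‖a 1 * lam‖ := norm_add_le _ _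
        _ = β + c * B := by rw [norm_mul, hβa0, hcdef, hBdef]
        _ ≤ c * B + β := by linarith
    refine zbr4_key2 u t2 c β B hu0 hc0 ht2sq hs1 hs2 ?_ ?_ hcon hq
    · have h2s : 2 * t2 = Real.sqrt 2 := by
        nlinarith [Real.sqrt_nonneg 2, hr2]
      rw [h2s]; exact hcu
    · have h2s : 2 * t2 = Real.sqrt 2 := by
        nlinarith [Real.sqrt_nonneg 2, hr2]
      rw [h2s]; exact hbu
  · -- n ≥ 3 case
    have hmn : 3 ≤ m + 1 := by omega
    have ht21 : 1 ≤ t2 := by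
      have hcos : (1:ℝ)/2 ≤ Real.cos (Real.pi / (↑(m+1) : ℝ)) := by
        rw [show (1:ℝ)/2 = Real.cos (Real.pi / 3) from Real.cos_pi_div_three.symm]
        apply Real.cos_le_cos_of_nonneg_of_le_pi
        · positivity
        · linarith [Real.pi_pos]
        · apply div_le_div_of_nonneg_left Real.pi_pos.le (by norm_num)
          · exact_mod_cast hmn
      have harg : (1:ℝ) ≤ 2 * Real.cos (Real.pi / (↑(m+1) : ℝ)) ^ 2 + 1/2 := by
        nlinarith [Real.cos_le_one (Real.pi / (↑(m+1) : ℝ))]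
      calc (1:ℝ) = Real.sqrt 1 := Real.sqrt_one.symm
        _ ≤ t2 := by rw [ht2def]; exact Real.sqrt_le_sqrt harg
    have hB1 : 1 < B := by nlinarith
    -- analytic core : (B - c) * sqrt (B^2 - 1) ≤ β
    have hBm : 0 < B ^ m := pow_pos (by linarith) m
    have hB21 : (0:ℝ) < B ^ 2 - 1 := by nlinarith
    set D := Real.sqrt (B ^ 2 - 1) with hDdef
    have hD0 : 0 < D := hDdef ▸ Real.sqrt_pos.2 hB21
    have hD2 : D ^ 2 = B ^ 2 - 1 := Real.sq_sqrt hB21.le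
    have hcore : (B - c) * D ≤ β := by
      -- split the sum
      have he : lam ^ (m+1) = -(∑ r ∈ range m, a r * lam ^ r + a m * lam ^ m) := by
        rw [Finset.sum_range_succ] at h
        linear_combination h
      set G := ∑ r ∈ range m, ((‖lam‖) ^ r) ^ 2 with hGdef
      have hstep : B ^ (m+1) ≤ c * B ^ m + β * Real.sqrt G := by
        calc B ^ (m+1) = ‖lam ^ (m+1)‖ := by rw [norm_pow]
          _ = ‖∑ r ∈ range m, a r * lam ^ r + a m * lam ^ m‖ := by
              rw [he, norm_neg]
          _ ≤ ‖∑ r ∈ range m, a r * lam ^ r‖ + ‖a m * lam ^ m‖ :=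
              norm_add_le _ _
          _ ≤ β * Real.sqrt G + c * B ^ m := by
              have := zbr4_cs m a lam
              rw [norm_mul, norm_pow]
              exact add_le_add this (le_of_eq rfl)
          _ = c * B ^ m + β * Real.sqrt G := by ring
      -- geometric sum bound
      have hGle : Real.sqrt G ≤ B ^ m / D := by
        have hGeq : G * (B ^ 2 - 1) = (B ^ 2) ^ m - 1 := by
          rw [hGdef]
          have : ∀ r, ((‖lam‖) ^ r) ^ 2 = (B ^ 2) ^ r := by
            intro r; rw [← pow_mul, ← pow_mul, mul_comm]
          simp_rw [this]
          exact geom_sum_mul (B ^ 2) m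
        have hGle' : G ≤ (B ^ m) ^ 2 / (B ^ 2 - 1) := by
          rw [le_div_iff₀ (by linarith)]
          calc G * (B ^ 2 - 1) = (B ^ 2) ^ m - 1 := hGeq
            _ ≤ (B ^ m) ^ 2 := by rw [← pow_mul, ← pow_mul, mul_comm]; linarith
        calc Real.sqrt G ≤ Real.sqrt ((B ^ m) ^ 2 / (B ^ 2 - 1)) := Real.sqrt_le_sqrt hGle'
          _ = B ^ m / D := by
              rw [Real.sqrt_div (sq_nonneg _), Real.sqrt_sq hBm.le, hDdef]
      have hβG : β * Real.sqrt G ≤ β * (B ^ m / D) :=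
        mul_le_mul_of_nonneg_left hGle hβ0
      have hfin : B * B ^ m ≤ (c + β / D) * B ^ m := by
        have : B ^ (m+1) = B * B ^ m := by ring
        rw [← this]
        calc B ^ (m+1) ≤ c * B ^ m + β * (B ^ m / D) := by linarith
          _ = (c + β / D) * B ^ m := by field_simp
      have hBle : B ≤ c + β / D := le_of_mul_le_mul_right hfin hBm
      have : B - c ≤ β / D := by linarith
      exact (le_div_iff₀ hD0).1 this
    -- squared version
    have hsq : (B - c) ^ 2 * (B ^ 2 - 1) ≤ β ^ 2 := by
      have h1 : ((B - c) * D) ^ 2 ≤ β ^ 2 :=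
        pow_le_pow_left₀ (mul_nonneg (by linarith) hD0.le) hcore 2
      calc (B - c) ^ 2 * (B ^ 2 - 1) = ((B - c) * D) ^ 2 := by rw [mul_pow, hD2]
        _ ≤ β ^ 2 := h1
    have hkey := zbr4_key3 u t2 c β (Real.sqrt 2) hu0 hc0 hβ0 ht21 hr2 hr1 hcu hbu
    -- contradiction
    have hcu' : c ≤ u := by nlinarith
    have ht : u + t2 < B := hcon
    have a1 : (u + t2 - c) ^ 2 < (B - c) ^ 2 := by nlinarith
    have a2 : (u + t2) ^ 2 - 1 < B ^ 2 - 1 := by nlinarith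
    have a3 : (u + t2 - c) ^ 2 * ((u + t2) ^ 2 - 1) < (B - c) ^ 2 * (B ^ 2 - 1) := by
      have n1 : 0 ≤ (u + t2 - c) ^ 2 := sq_nonneg _
      have n2 : 0 ≤ (u + t2) ^ 2 - 1 := by nlinarith
      have n3 : 0 < (B - c) ^ 2 := by nlinarith
      calc (u + t2 - c) ^ 2 * ((u + t2) ^ 2 - 1) ≤ (B - c) ^ 2 * ((u + t2) ^ 2 - 1) :=
            mul_le_mul_of_nonneg_right a1.le n2
        _ < (B - c) ^ 2 * (B ^ 2 - 1) := by exact mul_lt_mul_of_pos_left a2 n3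
    linarith
end

section
/- The operator norm of the Frobenius companion matrix C(p) of the monic polynomial p(z) = z^n + a_{n-1}z^{n-1} + … + a₀ equals [ (1/2)(1 + Σ_{r=0}^{n-1}|a_r|² + √((1 + Σ_{r=0}^{n-1}|a_r|²)² − 4|a₀|²)) ]^{1/2}. -/
open Finset

/-- The Frobenius companion matrix of `z^n + a_{n-1} z^{n-1} + ⋯ + a₀`:
first row `(-a_{n-1}, …, -a₀)`, ones on the subdiagonal, zeros elsewhere. -/
def companion (n : ℕ) (a : ℕ → ℂ) : Matrix (Fin n) (Fin n) ℂ :=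
  fun i j => if (i : ℕ) = 0 then -a (n - 1 - (j : ℕ))
    else if (i : ℕ) = (j : ℕ) + 1 then 1 else 0

noncomputable def compS (m : ℕ) (a : ℕ → ℂ) (x : EuclideanSpace ℂ (Fin (m+2))) : ℂ :=
  ∑ j : Fin (m+2), a (m + 1 - (j : ℕ)) * x j

lemma companion_apply_zero (m : ℕ) (a : ℕ → ℂ) (x : EuclideanSpace ℂ (Fin (m+2))) :
    Matrix.toEuclideanCLM (𝕜 := ℂ) (companion (m+2) a) x 0 = -compS m a x := by
  show ∑ j, companion (m+2) a 0 j * x j = _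
  simp [companion, compS, neg_mul, Finset.sum_neg_distrib]

lemma companion_apply_succ (m : ℕ) (a : ℕ → ℂ) (x : EuclideanSpace ℂ (Fin (m+2)))
    (i : Fin (m+1)) :
    Matrix.toEuclideanCLM (𝕜 := ℂ) (companion (m+2) a) x i.succ = x i.castSucc := by
  show ∑ j, companion (m+2) a i.succ j * x j = _
  rw [Finset.sum_eq_single i.castSucc]
  · simp [companion]
  · intro j _ hj
    have : ((i.succ : Fin (m+2)) : ℕ) ≠ (j:ℕ) + 1 := by
      simp only [Fin.val_succ]
      intro h
      apply hj
      apply Fin.ext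
      simp [Fin.coe_castSucc]
      omega
    simp only [companion, Fin.val_succ]
    rw [if_neg (by simp), if_neg (by simpa using this), zero_mul]
  · intro h; exact absurd (Finset.mem_univ _) h

lemma euclidean_norm_sq (k : ℕ) (y : EuclideanSpace ℂ (Fin k)) :
    ‖y‖^2 = ∑ i, ‖y i‖^2 := by
  rw [EuclideanSpace.norm_eq, Real.sq_sqrt (Finset.sum_nonneg fun i _ => sq_nonneg _)]

lemma norm_Tx_sq (m : ℕ) (a : ℕ → ℂ) (x : EuclideanSpace ℂ (Fin (m+2))) :
    ‖Matrix.toEuclideanCLM (𝕜 := ℂ) (companion (m+2) a) x‖^2 =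
      ‖compS m a x‖^2 + ∑ i : Fin (m+1), ‖x i.castSucc‖^2 := by
  rw [euclidean_norm_sq, Fin.sum_univ_succ]
  simp [companion_apply_zero, companion_apply_succ]

lemma norm_x_sq (m : ℕ) (x : EuclideanSpace ℂ (Fin (m+2))) :
    ‖x‖^2 = (∑ i : Fin (m+1), ‖x i.castSucc‖^2)
      + ‖x (Fin.last (m+1))‖^2 := by
  rw [euclidean_norm_sq, Fin.sum_univ_castSucc]

lemma compS_split (m : ℕ) (a : ℕ → ℂ) (x : EuclideanSpace ℂ (Fin (m+2))) :
    compS m a x = (∑ i : Fin (m+1), a (m + 1 - (i : ℕ)) * x i.castSucc)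
      + a 0 * x (Fin.last (m+1)) := by
  rw [compS, Fin.sum_univ_castSucc]
  simp

lemma sum_abs_a (m : ℕ) (a : ℕ → ℂ) :
    ∑ j : Fin (m+2), ‖a (m + 1 - (j:ℕ))‖^2
      = ∑ r ∈ range (m+2), ‖a r‖^2 := by
  rw [Fin.sum_univ_eq_sum_range (fun j => ‖a (m + 1 - j)‖^2)]
  have := Finset.sum_range_reflect (fun r => ‖a r‖^2) (m+2)
  simpa using this

lemma sum_abs_a' (m : ℕ) (a : ℕ → ℂ) :
    ∑ i : Fin (m+1), ‖a (m + 1 - (i:ℕ))‖^2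
      = (∑ r ∈ range (m+2), ‖a r‖^2) - ‖a 0‖^2 := by
  have h := sum_abs_a m a
  rw [Fin.sum_univ_castSucc] at h
  simp only [Fin.coe_castSucc, Fin.val_last] at h
  simp only [Nat.sub_self] at h
  linarith

noncomputable def lowerVec (m : ℕ) (a : ℕ → ℂ) (c1 c2 : ℝ) (φ : ℂ) :
    EuclideanSpace ℂ (Fin (m+2)) :=
  (WithLp.equiv 2 (Fin (m+2) → ℂ)).symm
    (fun j => if (j:ℕ) = m+1 then (c2:ℂ) * φ
      else (c1:ℂ) * (starRingEnd ℂ) (a (m+1-(j:ℕ))))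

lemma lowerVec_apply (m : ℕ) (a : ℕ → ℂ) (c1 c2 : ℝ) (φ : ℂ) (j : Fin (m+2)) :
    lowerVec m a c1 c2 φ j = if (j:ℕ) = m+1 then (c2:ℂ) * φ
      else (c1:ℂ) * (starRingEnd ℂ) (a (m+1-(j:ℕ))) := rfl

lemma sqrt_prod_eq (s A lam : ℝ) (hA : 0 ≤ A) (hα : 1+s-A ≤ lam)
    (hlam : lam^2 = (1+s)*lam - A) :
    Real.sqrt (lam-(1+s-A)) * Real.sqrt (lam-A) = Real.sqrt A * Real.sqrt (s-A) := by
  rw [← Real.sqrt_mul (by linarith), ← Real.sqrt_mul hA]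
  congr 1
  linear_combination hlam

lemma key_ineq (s A lam u w p : ℝ) (hA : 0 ≤ A) (hAs : A ≤ s)
    (hu : 0 ≤ u) (hw : 0 ≤ w) (hp : 0 ≤ p) (hp2 : p^2 ≤ (s - A) * u^2)
    (hlam : lam^2 = (1+s)*lam - A) (hα : 1+s-A ≤ lam) (hβ : A ≤ lam) :
    u^2 + (p + Real.sqrt A * w)^2 ≤ lam * (u^2 + w^2) := by
  have hsA : (0:ℝ) ≤ s - A := by linarith
  have e1 : Real.sqrt (lam-(1+s-A)) ^ 2 = lam-(1+s-A) := Real.sq_sqrt (by linarith)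
  have e2 : Real.sqrt (lam-A) ^ 2 = lam-A := Real.sq_sqrt (by linarith)
  have e3 : Real.sqrt A ^ 2 = A := Real.sq_sqrt hA
  have e4 : Real.sqrt (s-A) ^ 2 = s-A := Real.sq_sqrt hsA
  have hq : p ≤ Real.sqrt (s-A) * u := by
    have h1 : p^2 ≤ (Real.sqrt (s-A) * u)^2 := by rw [mul_pow, e4]; exact hp2
    have := Real.sqrt_le_sqrt h1
    rwa [Real.sqrt_sq hp, Real.sqrt_sq (mul_nonneg (Real.sqrt_nonneg _) hu)] at this
  have hprod := sqrt_prod_eq s A lam hA hα hlam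
  have expand : (Real.sqrt (lam-(1+s-A))*u - Real.sqrt (lam-A)*w)^2
      = (lam-(1+s-A))*u^2 - 2*((Real.sqrt A*w)*(Real.sqrt (s-A)*u)) + (lam-A)*w^2 := by
    linear_combination u^2*e1 + w^2*e2 - (2*u*w)*hprod
  have T1 := expand ▸ sq_nonneg (Real.sqrt (lam-(1+s-A))*u - Real.sqrt (lam-A)*w)
  have e4u : (Real.sqrt (s-A)*u)^2 = (s-A)*u^2 := by rw [mul_pow, e4]
  have e3w : (Real.sqrt A*w)^2 = A*w^2 := by rw [mul_pow, e3]
  have hcnn : 0 ≤ Real.sqrt A * w := mul_nonneg (Real.sqrt_nonneg _) hw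
  have hpc : p * (Real.sqrt A * w) ≤ (Real.sqrt (s-A)*u) * (Real.sqrt A * w) :=
    mul_le_mul_of_nonneg_right hq hcnn
  have hp2' : p^2 ≤ (Real.sqrt (s-A)*u)^2 := by rw [e4u]; exact hp2
  nlinarith [T1, hpc, hp2', e4u, e3w]

lemma lower_identity (s A lam : ℝ) (hA : 0 ≤ A) (hAs : A ≤ s) (hα : 1+s-A ≤ lam)
    (hβ : A ≤ lam) (hlam : lam^2 = (1+s)*lam - A) :
    (Real.sqrt (lam-A)*(s-A) + Real.sqrt A * (Real.sqrt (lam-(1+s-A)) * Real.sqrt (s-A)))^2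
      + (lam-A)*(s-A)
    = lam * ((lam-A)*(s-A) + (lam-(1+s-A))*(s-A)) := by
  have hprod := sqrt_prod_eq s A lam hA hα hlam
  have e1 : Real.sqrt (lam-(1+s-A)) ^ 2 = lam-(1+s-A) := Real.sq_sqrt (by linarith)
  have e2 : Real.sqrt (lam-A) ^ 2 = lam-A := Real.sq_sqrt (by linarith)
  have hc : Real.sqrt A * (Real.sqrt (lam-(1+s-A)) * Real.sqrt (s-A))
      = (lam-(1+s-A)) * Real.sqrt (lam-A) := by
    calc Real.sqrt A * (Real.sqrt (lam-(1+s-A)) * Real.sqrt (s-A))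
        = Real.sqrt (lam-(1+s-A)) * (Real.sqrt A * Real.sqrt (s-A)) := by ring
      _ = Real.sqrt (lam-(1+s-A)) * (Real.sqrt (lam-(1+s-A)) * Real.sqrt (lam-A)) := by
          rw [← hprod]
      _ = (Real.sqrt (lam-(1+s-A)))^2 * Real.sqrt (lam-A) := by ring
      _ = (lam-(1+s-A)) * Real.sqrt (lam-A) := by rw [e1]
  rw [hc]
  linear_combination (((s-A)+(lam-(1+s-A)))^2) * e2 + (lam-(1+s-A)) * hlam

set_option maxHeartbeats 2000000 in
theorem norm_companion (n : ℕ) (hn : 2 ≤ n) (a : ℕ → ℂ) :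
    ‖Matrix.toEuclideanCLM (𝕜 := ℂ) (companion n a)‖ =
      Real.sqrt ((1 / 2) * (1 + (∑ r ∈ range n, ‖a r‖ ^ 2) +
        Real.sqrt ((1 + ∑ r ∈ range n, ‖a r‖ ^ 2) ^ 2 -
          4 * ‖a 0‖ ^ 2))) := by
  obtain ⟨m, rfl⟩ : ∃ m, n = m + 2 := ⟨n - 2, by omega⟩
  clear hn
  set s : ℝ := ∑ r ∈ range (m+2), ‖a r‖ ^ 2 with hs_def
  set A : ℝ := ‖a 0‖ ^ 2 with hA_def
  set D : ℝ := Real.sqrt ((1 + s)^2 - 4*A) with hD_def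
  have hA : 0 ≤ A := sq_nonneg _
  have hs0 : 0 ≤ s := Finset.sum_nonneg fun r _ => sq_nonneg _
  have hAs : A ≤ s := Finset.single_le_sum (f := fun r => ‖a r‖^2)
    (fun r _ => sq_nonneg _) (mem_range.mpr (by omega))
  have hD0 : 0 ≤ D := Real.sqrt_nonneg _
  have hD2 : D^2 = (1+s)^2 - 4*A := Real.sq_sqrt (by nlinarith [sq_nonneg (1-s), hAs, hA])
  set lam : ℝ := (1+s+D)/2 with hlam_def
  have hlam : lam^2 = (1+s)*lam - A := by rw [hlam_def]; linear_combination hD2/4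
  have h1lam : 1 ≤ lam := by rw [hlam_def]; nlinarith [hD0, hD2, sub_nonneg.2 hAs]
  have hslam : s ≤ lam := by rw [hlam_def]; nlinarith [hD0, hD2, sub_nonneg.2 hAs]
  have hαl : 1+s-A ≤ lam := by
    rw [hlam_def]; nlinarith [hD0, hD2, mul_nonneg hA (sub_nonneg.2 hAs)]
  have hβl : A ≤ lam := le_trans hAs hslam
  have hlam0 : (0:ℝ) ≤ lam := le_trans zero_le_one h1lam
  -- upper bound
  have hub : ∀ x : EuclideanSpace ℂ (Fin (m+2)),
      ‖Matrix.toEuclideanCLM (𝕜 := ℂ) (companion (m+2) a) x‖ ≤ Real.sqrt lam * ‖x‖ := by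
    intro x
    have hu2nn : (0:ℝ) ≤ ∑ i : Fin (m+1), ‖x i.castSucc‖^2 :=
      Finset.sum_nonneg fun _ _ => sq_nonneg _
    have hP2 : ‖∑ i : Fin (m+1), a (m + 1 - (i:ℕ)) * x i.castSucc‖^2
        ≤ (s - A) * ∑ i : Fin (m+1), ‖x i.castSucc‖^2 := by
      have h1 : ‖∑ i : Fin (m+1), a (m + 1 - (i:ℕ)) * x i.castSucc‖
          ≤ ∑ i : Fin (m+1), ‖a (m + 1 - (i:ℕ))‖ * ‖x i.castSucc‖ := by
        refine le_trans (norm_sum_le _ _) (le_of_eq ?_)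
        exact Finset.sum_congr rfl fun i _ => norm_mul _ _
      have h2 := Finset.sum_mul_sq_le_sq_mul_sq Finset.univ
        (fun i : Fin (m+1) => ‖a (m + 1 - (i:ℕ))‖)
        (fun i : Fin (m+1) => ‖x i.castSucc‖)
      have h3 : ∑ i : Fin (m+1), ‖a (m + 1 - (i:ℕ))‖^2 = s - A := by
        rw [sum_abs_a', ← hs_def, ← hA_def]
      rw [h3] at h2
      calc ‖∑ i : Fin (m+1), a (m + 1 - (i:ℕ)) * x i.castSucc‖^2
          ≤ (∑ i : Fin (m+1), ‖a (m + 1 - (i:ℕ))‖ * ‖x i.castSucc‖)^2 :=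
            pow_le_pow_left₀ (norm_nonneg _) h1 2
        _ ≤ _ := h2
    have hSle : ‖compS m a x‖
        ≤ ‖∑ i : Fin (m+1), a (m + 1 - (i:ℕ)) * x i.castSucc‖
          + Real.sqrt A * ‖x (Fin.last (m+1))‖ := by
      rw [compS_split]
      refine le_trans (norm_add_le _ _) ?_
      rw [norm_mul]
      have hA0 : ‖a 0‖ = Real.sqrt A := by
        rw [hA_def, Real.sqrt_sq (norm_nonneg _)]
      rw [hA0]
    have key := key_ineq s A lam
      (Real.sqrt (∑ i : Fin (m+1), ‖x i.castSucc‖^2))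
      (‖x (Fin.last (m+1))‖)
      (‖∑ i : Fin (m+1), a (m + 1 - (i:ℕ)) * x i.castSucc‖)
      hA hAs (Real.sqrt_nonneg _) (norm_nonneg _) (norm_nonneg _)
      (by rw [Real.sq_sqrt hu2nn]; exact hP2) hlam hαl hβl
    rw [Real.sq_sqrt hu2nn] at key
    have hsq : ‖Matrix.toEuclideanCLM (𝕜 := ℂ) (companion (m+2) a) x‖^2 ≤ lam * ‖x‖^2 := by
      rw [norm_Tx_sq, norm_x_sq]
      have hSsq : ‖compS m a x‖^2
          ≤ (‖∑ i : Fin (m+1), a (m + 1 - (i:ℕ)) * x i.castSucc‖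
            + Real.sqrt A * ‖x (Fin.last (m+1))‖)^2 :=
        pow_le_pow_left₀ (norm_nonneg _) hSle 2
      linarith [key, hSsq]
    calc ‖Matrix.toEuclideanCLM (𝕜 := ℂ) (companion (m+2) a) x‖
        = Real.sqrt (‖Matrix.toEuclideanCLM (𝕜 := ℂ) (companion (m+2) a) x‖^2) :=
          (Real.sqrt_sq (norm_nonneg _)).symm
      _ ≤ Real.sqrt (lam * ‖x‖^2) := Real.sqrt_le_sqrt hsq
      _ = Real.sqrt lam * ‖x‖ := by rw [Real.sqrt_mul hlam0, Real.sqrt_sq (norm_nonneg _)]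
  have hTle : ‖Matrix.toEuclideanCLM (𝕜 := ℂ) (companion (m+2) a)‖ ≤ Real.sqrt lam :=
    ContinuousLinearMap.opNorm_le_bound _ (Real.sqrt_nonneg _) hub
  -- lower bound witness
  have hlb : ∃ x : EuclideanSpace ℂ (Fin (m+2)), x ≠ 0 ∧
      lam * ‖x‖^2 ≤ ‖Matrix.toEuclideanCLM (𝕜 := ℂ) (companion (m+2) a) x‖^2 := by
    rcases eq_or_lt_of_le hAs with hsa | hsa
    · -- degenerate case s = A
      have h0mem : (0:ℕ) ∈ range (m+2) := mem_range.mpr (by omega)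
      have hsplit : A + ∑ r ∈ (range (m+2)).erase 0, ‖a r‖^2 = s := by
        rw [hs_def, hA_def]; exact Finset.add_sum_erase (range (m+2)) (fun r => ‖a r‖^2) h0mem
      have hrest : ∑ r ∈ (range (m+2)).erase 0, ‖a r‖^2 = 0 := by linarith
      have hzero : ∀ r ∈ (range (m+2)).erase 0, ‖a r‖^2 = 0 :=
        (Finset.sum_eq_zero_iff_of_nonneg (fun r _ => sq_nonneg _)).mp hrest
      have ha1 : a (m+1) = 0 := by
        have h := hzero (m+1) (by simp [Finset.mem_erase])
        exact norm_eq_zero.mp (sq_eq_zero_iff.mp h)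
      have hfact : (lam - 1) * (lam - A) = 0 := by linear_combination hlam - lam*hsa
      rcases mul_eq_zero.mp hfact with h1 | h2
      · -- lam = 1, witness e₀
        have hl1 : lam = 1 := by linarith [sub_eq_zero.mp h1]
        refine ⟨EuclideanSpace.single (0 : Fin (m+2)) (1:ℂ), ?_, ?_⟩
        · intro h
          have := congrArg (fun y : EuclideanSpace ℂ (Fin (m+2)) => y 0) h
          simp [EuclideanSpace.single_apply] at this
        · have hS0 : compS m a (EuclideanSpace.single (0 : Fin (m+2)) (1:ℂ)) = a (m+1) := by
            rw [compS]
            simp [EuclideanSpace.single_apply]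
          have hw0 : (EuclideanSpace.single (0 : Fin (m+2)) (1:ℂ)) (Fin.last (m+1)) = 0 := by
            rw [EuclideanSpace.single_apply, if_neg]
            intro h
            have := congrArg Fin.val h
            simp [Fin.val_last] at this
          rw [norm_Tx_sq, norm_x_sq, hS0, ha1, hw0, hl1]
          simp
      · -- lam = A, witness e_last
        have hlA : lam = A := by linarith [sub_eq_zero.mp h2]
        refine ⟨EuclideanSpace.single (Fin.last (m+1)) (1:ℂ), ?_, ?_⟩
        · intro h
          have := congrArg (fun y : EuclideanSpace ℂ (Fin (m+2)) => y (Fin.last (m+1))) h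
          simp [EuclideanSpace.single_apply] at this
        · have hS0 : compS m a (EuclideanSpace.single (Fin.last (m+1)) (1:ℂ)) = a 0 := by
            rw [compS]
            simp [EuclideanSpace.single_apply, Fin.val_last]
          have hu20 : ∀ i : Fin (m+1),
              (EuclideanSpace.single (Fin.last (m+1)) (1:ℂ)) i.castSucc = 0 := by
            intro i
            rw [EuclideanSpace.single_apply, if_neg (Fin.castSucc_lt_last i).ne]
          have hsum0 : ∑ i : Fin (m+1),
              ‖(EuclideanSpace.single (Fin.last (m+1)) (1:ℂ)) i.castSucc‖^2 = 0 :=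
            Finset.sum_eq_zero fun i _ => by rw [hu20 i]; simp
          have hlast : (EuclideanSpace.single (Fin.last (m+1)) (1:ℂ)) (Fin.last (m+1)) = 1 := by
            simp [EuclideanSpace.single_apply]
          rw [norm_Tx_sq, norm_x_sq, hS0, hsum0, hlast, hlA, ← hA_def]
          simp
    · -- main case A < s
      have hsA' : (0:ℝ) < s - A := sub_pos.mpr hsa
      have hβpos : (0:ℝ) < lam - A := lt_of_lt_of_le hsA' (by linarith)
      set φ : ℂ := if a 0 = 0 then 1 else (starRingEnd ℂ) (a 0) / ‖a 0‖ with hφ_def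
      have hφabs : ‖φ‖ = 1 := by
        rw [hφ_def]; split_ifs with h
        · simp
        · rw [norm_div, Complex.norm_conj, Complex.norm_real, Real.norm_eq_abs,
            abs_of_nonneg (norm_nonneg _), div_self (norm_ne_zero_iff.mpr h)]
      have hφa : a 0 * φ = ((Real.sqrt A : ℝ) : ℂ) := by
        have hsqrtA : Real.sqrt A = ‖a 0‖ := by
          rw [hA_def, Real.sqrt_sq (norm_nonneg _)]
        rw [hφ_def]; split_ifs with h
        · simp [h, hsqrtA, map_zero]
        · rw [mul_div_assoc'] -- a0 * conj a0 / |a0|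
          rw [Complex.mul_conj, hsqrtA]
          rw [Complex.normSq_eq_norm_sq]
          have hne : (‖a 0‖ : ℂ) ≠ 0 := by
            simpa using norm_ne_zero_iff.mpr h
          field_simp
          push_cast
          ring
      obtain ⟨x₀, hx₀app⟩ : ∃ x₀ : EuclideanSpace ℂ (Fin (m+2)),
          ∀ j : Fin (m+2), x₀ j = if (j:ℕ) = m+1
            then ((Real.sqrt (lam-(1+s-A)) * Real.sqrt (s-A) : ℝ) : ℂ) * φ
            else ((Real.sqrt (lam-A) : ℝ) : ℂ) * (starRingEnd ℂ) (a (m+1-(j:ℕ))) :=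
        ⟨lowerVec m a (Real.sqrt (lam-A)) (Real.sqrt (lam-(1+s-A)) * Real.sqrt (s-A)) φ,
          lowerVec_apply m a _ _ φ⟩
      have hwx : ‖x₀ (Fin.last (m+1))‖
          = Real.sqrt (lam-(1+s-A)) * Real.sqrt (s-A) := by
        rw [hx₀app, if_pos (by simp [Fin.val_last])]
        rw [norm_mul, hφabs, Complex.norm_real, Real.norm_eq_abs, mul_one,
          abs_of_nonneg (mul_nonneg (Real.sqrt_nonneg _) (Real.sqrt_nonneg _))]
      have hu2x : ∑ i : Fin (m+1), ‖x₀ i.castSucc‖^2 = (lam-A)*(s-A) := by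
        have hterm : ∀ i : Fin (m+1), ‖x₀ i.castSucc‖^2
            = (lam-A) * ‖a (m+1-(i:ℕ))‖^2 := by
          intro i
          rw [hx₀app, if_neg (by rw [Fin.coe_castSucc]; exact i.isLt.ne)]
          rw [norm_mul, Complex.norm_real, Real.norm_eq_abs, Complex.norm_conj,
            abs_of_nonneg (Real.sqrt_nonneg _), mul_pow, Real.sq_sqrt (by linarith)]
          rw [Fin.coe_castSucc]
        rw [Finset.sum_congr rfl (fun i _ => hterm i), ← Finset.mul_sum, sum_abs_a',
          ← hs_def, ← hA_def]
      have hSx : compS m a x₀ = ((Real.sqrt (lam-A)*(s-A)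
          + Real.sqrt A * (Real.sqrt (lam-(1+s-A)) * Real.sqrt (s-A)) : ℝ) : ℂ) := by
        rw [compS_split]
        have h1 : ∀ i : Fin (m+1), a (m+1-(i:ℕ)) * x₀ i.castSucc
            = ((Real.sqrt (lam-A) : ℝ):ℂ) * ((‖a (m+1-(i:ℕ))‖^2 : ℝ) : ℂ) := by
          intro i
          rw [hx₀app, if_neg (by rw [Fin.coe_castSucc]; exact i.isLt.ne), Fin.coe_castSucc]
          rw [mul_comm (a (m+1-(i:ℕ))), mul_assoc]
          congr 1
          rw [mul_comm, Complex.mul_conj, Complex.normSq_eq_norm_sq]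
        rw [Finset.sum_congr rfl (fun i _ => h1 i), ← Finset.mul_sum]
        have h2 : ∑ i : Fin (m+1), ((‖a (m+1-(i:ℕ))‖^2 : ℝ):ℂ) = ((s - A : ℝ):ℂ) := by
          rw [← Complex.ofReal_sum]
          norm_cast
          rw [sum_abs_a', ← hs_def, ← hA_def]
        rw [h2, hx₀app, if_pos (by simp [Fin.val_last])]
        rw [mul_comm (((Real.sqrt (lam-(1+s-A)) * Real.sqrt (s-A) : ℝ) : ℂ)) φ,
          ← mul_assoc, mul_comm (a 0) φ, mul_comm φ (a 0), hφa]
        push_cast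
        ring
      have hq1 : ‖compS m a x₀‖^2 = (Real.sqrt (lam-A)*(s-A)
          + Real.sqrt A * (Real.sqrt (lam-(1+s-A)) * Real.sqrt (s-A)))^2 := by
        rw [hSx, Complex.norm_real, Real.norm_eq_abs, abs_of_nonneg]
        have := Real.sqrt_nonneg (lam-A)
        have := Real.sqrt_nonneg A
        have := Real.sqrt_nonneg (lam-(1+s-A))
        have := Real.sqrt_nonneg (s-A)
        nlinarith [mul_nonneg (Real.sqrt_nonneg (lam-(1+s-A))) (Real.sqrt_nonneg (s-A))]
      refine ⟨x₀, ?_, ?_⟩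
      · have hn2 : 0 < ‖x₀‖^2 := by
          rw [norm_x_sq, hu2x]
          nlinarith [sq_nonneg (‖x₀ (Fin.last (m+1))‖), mul_pos hβpos hsA']
        intro h
        rw [h, norm_zero] at hn2
        simp at hn2
      · rw [norm_Tx_sq, norm_x_sq, hu2x, hwx, hq1]
        have hw2 : (Real.sqrt (lam-(1+s-A)) * Real.sqrt (s-A))^2
            = (lam-(1+s-A))*(s-A) := by
          rw [mul_pow, Real.sq_sqrt (by linarith), Real.sq_sqrt (by linarith)]
        rw [hw2]
        exact le_of_eq (lower_identity s A lam hA hAs hαl hβl hlam).symm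
  obtain ⟨x₀, hx0, hxineq⟩ := hlb
  have hxpos : 0 < ‖x₀‖ := norm_pos_iff.mpr hx0
  have hge : Real.sqrt lam ≤ ‖Matrix.toEuclideanCLM (𝕜 := ℂ) (companion (m+2) a)‖ := by
    have h2 : (Real.sqrt lam * ‖x₀‖)^2
        ≤ ‖Matrix.toEuclideanCLM (𝕜 := ℂ) (companion (m+2) a) x₀‖^2 := by
      rw [mul_pow, Real.sq_sqrt hlam0]; exact hxineq
    have h3 := Real.sqrt_le_sqrt h2
    rw [Real.sqrt_sq (mul_nonneg (Real.sqrt_nonneg _) (norm_nonneg _)),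
      Real.sqrt_sq (norm_nonneg _)] at h3
    have h4 := h3.trans ((Matrix.toEuclideanCLM (𝕜 := ℂ) (companion (m+2) a)).le_opNorm x₀)
    exact le_of_mul_le_mul_right h4 hxpos
  rw [le_antisymm hTle hge]
  congr 1
  rw [hlam_def]
  ring
end

section
/- For the Frobenius companion matrix C(p) of p(z) = z^n + a_{n-1}z^{n-1} + … + a₀, one has ‖C(p)²‖ ≤ (1 + Σ_{r=0}^{n-1}(|a_r|² + |b_r|²))^{1/2}, where b_r = a_{n-1}a_r − a_{r-1} for r = 0, …, n−1 with a_{−1} = 0. -/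
open Finset

lemma companion_sq_apply (n : ℕ) (hn : 2 ≤ n) (a : ℕ → ℂ) (i j : Fin n) :
    (companion n a ^ 2) i j =
      if (i : ℕ) = 0 then
        a (n-1) * a (n-1-(j:ℕ)) - (if (n-1-(j:ℕ)) = 0 then 0 else a (n-1-(j:ℕ)-1))
      else if (i : ℕ) = 1 then -a (n-1-(j:ℕ))
      else if (i : ℕ) = (j : ℕ) + 2 then 1 else 0 := by
  rw [sq, Matrix.mul_apply]
  rcases Nat.lt_or_ge (i : ℕ) 2 with hi | hi
  · interval_cases h : (i : ℕ)
    · -- i = 0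
      simp only [h, if_pos rfl]
      rcases Nat.lt_or_ge ((j:ℕ)+1) n with hj | hj
      · have h01 : (⟨0, by omega⟩ : Fin n) ≠ ⟨(j:ℕ)+1, hj⟩ := by
          simp [Fin.ext_iff]
        rw [← Finset.sum_subset (Finset.subset_univ ({⟨0, by omega⟩, ⟨(j:ℕ)+1, hj⟩} : Finset (Fin n)))]
        · rw [Finset.sum_pair h01]
          simp only [companion]
          have hjn : ¬ ((j:ℕ) = n - 1) := by omega
          have : n - 1 - (j:ℕ) ≠ 0 := by omega
          have hss : n - 1 - ((j:ℕ)+1) = n - 1 - (j:ℕ) - 1 := by omega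
          simp only [this, if_neg this, h, if_pos rfl, hss]
          norm_num
          ring
        · intro k _ hk
          simp only [companion]
          have hk0 : (k:ℕ) ≠ 0 := by
            intro h'; apply hk; simp [Fin.ext_iff, h']
          have hk1 : (k:ℕ) ≠ (j:ℕ)+1 := by
            intro h'; apply hk; simp [Fin.ext_iff, h']
          simp [hk0, hk1]
      · -- j = n-1, only k = 0 contributes
        rw [Finset.sum_eq_single (⟨0, by omega⟩ : Fin n)]
        · simp only [companion]
          have h0 : n - 1 - (j:ℕ) = 0 := by omega
          simp [h0, h]
        · intro k _ hk
          have hk0 : (k:ℕ) ≠ 0 := by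
            intro h'; apply hk; simp [Fin.ext_iff, h']
          have hk1 : (k:ℕ) ≠ (j:ℕ)+1 := by omega
          simp [companion, hk0, hk1]
        · intro h'; exact absurd (Finset.mem_univ _) h'
    · -- i = 1
      simp only [h]
      norm_num
      rw [Finset.sum_eq_single (⟨0, by omega⟩ : Fin n)]
      · simp [companion, h]
      · intro k _ hk
        have hk0 : (k:ℕ) ≠ 0 := by
          intro h'; apply hk; simp [Fin.ext_iff, h']
        have h1k : (1:ℕ) ≠ (k:ℕ)+1 := by omega
        simp [companion, h, h1k, hk0]
      · intro h'; exact absurd (Finset.mem_univ _) h'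
  · -- i ≥ 2
    have hi0 : (i:ℕ) ≠ 0 := by omega
    have hi1 : (i:ℕ) ≠ 1 := by omega
    simp only [hi0, hi1, if_neg hi0, if_neg hi1]
    have hlt : (i:ℕ) - 1 < n := by omega
    rw [Finset.sum_eq_single (⟨(i:ℕ)-1, hlt⟩ : Fin n)]
    · have h1 : (i:ℕ) - 1 ≠ 0 := by omega
      have h2 : (i:ℕ) = ((i:ℕ)-1) + 1 := by omega
      by_cases hc : (i:ℕ) = (j:ℕ)+2
      · have h3 : (i:ℕ)-1 = (j:ℕ)+1 := by omega
        simp [companion, hi0, h1, h3, hc, ← h2]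
      · have h3 : (i:ℕ)-1 ≠ (j:ℕ)+1 := by omega
        simp [companion, hi0, h1, h3, hc, ← h2]
    · intro k _ hk
      have : (i:ℕ) ≠ (k:ℕ) + 1 := by
        intro h'; apply hk; simp [Fin.ext_iff]; omega
      simp [companion, hi0, this]
    · intro h'; exact absurd (Finset.mem_univ _) h'

theorem norm_companion_sq_le (n : ℕ) (hn : 2 ≤ n) (a : ℕ → ℂ) :
    ‖Matrix.toEuclideanCLM (𝕜 := ℂ) ((companion n a ^ 2 : Matrix (Fin n) (Fin n) ℂ))‖ ≤
      Real.sqrt (1 + ∑ r ∈ range n, (‖a r‖ ^ 2 +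
        ‖a (n - 1) * a r - if r = 0 then 0 else a (r - 1)‖ ^ 2)) := by
  have hn0 : 0 < n := by omega
  have hn1 : 1 < n := by omega
  set A := (companion n a ^ 2 : Matrix (Fin n) (Fin n) ℂ) with hA
  set S := ∑ r ∈ range n, (‖a r‖ ^ 2 +
      ‖a (n - 1) * a r - if r = 0 then 0 else a (r - 1)‖ ^ 2) with hS
  have hS0 : (0:ℝ) ≤ S := Finset.sum_nonneg fun r _ => by positivity
  have h1S : (0:ℝ) ≤ 1 + S := by linarith
  refine ContinuousLinearMap.opNorm_le_bound _ (Real.sqrt_nonneg _) fun x => ?_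
  set i0 : Fin n := ⟨0, hn0⟩
  set i1 : Fin n := ⟨1, hn1⟩
  set y : Fin n → ℂ := A.mulVec (fun j => x j) with hy
  have hTx : ∀ i : Fin n, (Matrix.toEuclideanCLM (𝕜 := ℂ) A) x i = y i := by
    intro i
    exact congrFun (Matrix.ofLp_toEuclideanCLM (𝕜 := ℂ) A x) i
  set X := ∑ j : Fin n, ‖x j‖ ^ 2 with hX
  have hX0 : (0:ℝ) ≤ X := Finset.sum_nonneg fun j _ => by positivity
  have hxX : ‖x‖ = Real.sqrt X := by
    simp only [EuclideanSpace.norm_eq, hX]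
  have hyi : ∀ i : Fin n, y i = ∑ j : Fin n, A i j * x j := by
    intro i; simp [hy, Matrix.mulVec, dotProduct]
  -- Cauchy–Schwarz
  have CS : ∀ c : Fin n → ℂ, ‖∑ j : Fin n, c j * x j‖ ^ 2 ≤
      (∑ j : Fin n, ‖c j‖ ^ 2) * X := by
    intro c
    calc ‖∑ j : Fin n, c j * x j‖ ^ 2
        ≤ (∑ j : Fin n, ‖c j‖ * ‖x j‖) ^ 2 := by
          apply pow_le_pow_left₀ (norm_nonneg _)
          refine le_trans (norm_sum_le _ _) (le_of_eq ?_)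
          exact Finset.sum_congr rfl fun j _ => norm_mul _ _
      _ ≤ (∑ j : Fin n, ‖c j‖ ^ 2) * X :=
          Finset.sum_mul_sq_le_sq_mul_sq _ _ _
  -- entries of the two top rows
  have hA0 : ∀ j : Fin n, A i0 j =
      a (n-1) * a (n-1-(j:ℕ)) - (if (n-1-(j:ℕ)) = 0 then 0 else a (n-1-(j:ℕ)-1)) := by
    intro j; rw [hA, companion_sq_apply n hn a i0 j]; simp [i0]
  have hA1 : ∀ j : Fin n, A i1 j = -a (n-1-(j:ℕ)) := by
    intro j; rw [hA, companion_sq_apply n hn a i1 j]; simp [i1]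
  -- the two row norms sum to S
  have hrows : (∑ j : Fin n, ‖A i0 j‖ ^ 2) +
      (∑ j : Fin n, ‖A i1 j‖ ^ 2) = S := by
    have : ∀ j : Fin n, ‖A i0 j‖ ^ 2 + ‖A i1 j‖ ^ 2 =
        (fun r => ‖a r‖ ^ 2 +
          ‖a (n - 1) * a r - if r = 0 then 0 else a (r - 1)‖ ^ 2) (n-1-(j:ℕ)) := by
      intro j
      rw [hA0 j, hA1 j]
      simp only [norm_neg]
      ring
    rw [← Finset.sum_add_distrib]
    rw [Finset.sum_congr rfl fun j _ => this j]
    rw [Fin.sum_univ_eq_sum_range (fun k =>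
      (fun r => ‖a r‖ ^ 2 +
        ‖a (n - 1) * a r - if r = 0 then 0 else a (r - 1)‖ ^ 2) (n-1-k)) n]
    rw [hS]
    exact Finset.sum_range_reflect (fun r => ‖a r‖ ^ 2 +
      ‖a (n - 1) * a r - if r = 0 then 0 else a (r - 1)‖ ^ 2) n
  -- shift rows
  have hyshift : ∀ i : Fin n, 2 ≤ (i:ℕ) → y i = x ⟨(i:ℕ)-2, by omega⟩ := by
    intro i hi
    rw [hyi i]
    have hlt : (i:ℕ) - 2 < n := by omega
    rw [Finset.sum_eq_single (⟨(i:ℕ)-2, hlt⟩ : Fin n)]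
    · rw [hA, companion_sq_apply n hn a i _]
      have h0 : (i:ℕ) ≠ 0 := by omega
      have h1 : (i:ℕ) ≠ 1 := by omega
      have h2 : (i:ℕ) = ((i:ℕ)-2) + 2 := by omega
      simp [h0, h1, ← h2]
    · intro k _ hk
      rw [hA, companion_sq_apply n hn a i k]
      have h0 : (i:ℕ) ≠ 0 := by omega
      have h1 : (i:ℕ) ≠ 1 := by omega
      have h2 : (i:ℕ) ≠ (k:ℕ) + 2 := by
        intro h'; apply hk; ext; simp; omega
      simp [h0, h1, h2]
    · intro h'; exact absurd (Finset.mem_univ _) h'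
  -- split the sum
  have hfilt : (univ : Finset (Fin n)).filter (fun i : Fin n => (i:ℕ) < 2) = {i0, i1} := by
    ext k
    simp only [Finset.mem_filter, Finset.mem_univ, true_and, Finset.mem_insert,
      Finset.mem_singleton]
    constructor
    · intro hk
      interval_cases h : (k:ℕ)
      · left; ext; simpa using h
      · right; ext; simpa using h
    · rintro (rfl | rfl) <;> simp [i0, i1]
  have hne : i0 ≠ i1 := by simp [i0, i1, Fin.ext_iff]
  have hsplit : ∑ i : Fin n, ‖y i‖ ^ 2 =
      ‖y i0‖ ^ 2 + ‖y i1‖ ^ 2 +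
        ∑ i ∈ univ.filter (fun i : Fin n => ¬ (i:ℕ) < 2), ‖y i‖ ^ 2 := by
    rw [← Finset.sum_filter_add_sum_filter_not univ (fun i : Fin n => (i:ℕ) < 2), hfilt,
      Finset.sum_pair hne]
  -- tail bound
  have htail : ∑ i ∈ univ.filter (fun i : Fin n => ¬ (i:ℕ) < 2), ‖y i‖ ^ 2 ≤ X := by
    have he : ∀ i ∈ univ.filter (fun i : Fin n => ¬ (i:ℕ) < 2),
        ‖y i‖ ^ 2 = (fun j : Fin n => ‖x j‖ ^ 2)
          (⟨(i:ℕ)-2, by have := i.isLt; omega⟩ : Fin n) := by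
      intro i hi
      simp only [Finset.mem_filter] at hi
      rw [hyshift i (by omega)]
    rw [Finset.sum_congr rfl he]
    have hinj : ∀ u ∈ univ.filter (fun i : Fin n => ¬ (i:ℕ) < 2),
        ∀ v ∈ univ.filter (fun i : Fin n => ¬ (i:ℕ) < 2),
        (fun i : Fin n => (⟨(i:ℕ)-2, by have := i.isLt; omega⟩ : Fin n)) u =
          (fun i : Fin n => (⟨(i:ℕ)-2, by have := i.isLt; omega⟩ : Fin n)) v → u = v := by
      intro u hu v hv huv
      simp only [Finset.mem_filter] at hu hv
      have := congrArg Fin.val huv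
      simp only [] at this
      ext; omega
    rw [← Finset.sum_image (f := fun j : Fin n => ‖x j‖ ^ 2) hinj]
    exact Finset.sum_le_sum_of_subset_of_nonneg (Finset.subset_univ _)
      (fun j _ _ => by positivity)
  -- combine
  have key : ∑ i : Fin n, ‖y i‖ ^ 2 ≤ (1 + S) * X := by
    rw [hsplit]
    have b0 : ‖y i0‖ ^ 2 ≤ (∑ j : Fin n, ‖A i0 j‖ ^ 2) * X := by
      rw [hyi i0]; exact CS _
    have b1 : ‖y i1‖ ^ 2 ≤ (∑ j : Fin n, ‖A i1 j‖ ^ 2) * X := by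
      rw [hyi i1]; exact CS _
    calc ‖y i0‖ ^ 2 + ‖y i1‖ ^ 2 +
        ∑ i ∈ univ.filter (fun i : Fin n => ¬ (i:ℕ) < 2), ‖y i‖ ^ 2
        ≤ (∑ j : Fin n, ‖A i0 j‖ ^ 2) * X +
          (∑ j : Fin n, ‖A i1 j‖ ^ 2) * X + X := by
          exact add_le_add (add_le_add b0 b1) htail
      _ = (1 + S) * X := by rw [← add_mul, hrows]; ring
  -- finish
  have hTnorm : ‖(Matrix.toEuclideanCLM (𝕜 := ℂ) A) x‖ =
      Real.sqrt (∑ i : Fin n, ‖y i‖ ^ 2) := by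
    have hni : ∀ i : Fin n, ‖(Matrix.toEuclideanCLM (𝕜 := ℂ) A) x i‖ = ‖y i‖ :=
      fun i => by rw [hTx i]
    simp_rw [EuclideanSpace.norm_eq, hni]
  rw [hTnorm, hxX, ← Real.sqrt_mul h1S]
  exact Real.sqrt_le_sqrt key
end

section
/- Every zero λ of the monic polynomial p(z) = z^n + a_{n-1}z^{n-1} + … + a₀ (n ≥ 2) satisfies |λ|² ≤ (3/4)α + (1/4)β², where α = (1 + Σ_{r=0}^{n-1}(|a_r|² + |b_r|²))^{1/2} with b_r = a_{n-1}a_r − a_{r-1} (a_{−1}=0), and β = [ (1/2)(1 + Σ_{r=0}^{n-1}|a_r|² + √((1 + Σ_{r=0}^{n-1}|a_r|²)² − 4|a₀|²)) ]^{1/2}. -/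
open Finset

private lemma abs_sum_le' (m : ℕ) (c : ℕ → ℂ) (lam : ℂ) :
    ‖∑ r ∈ range m, c r * lam ^ r‖ ≤
      ∑ r ∈ range m, ‖c r‖ * ‖lam‖ ^ r := by
  refine (norm_sum_le _ _).trans_eq ?_
  exact Finset.sum_congr rfl fun r _ => by rw [norm_mul, norm_pow]

private lemma abs_pow_sq' (lam : ℂ) (k : ℕ) :
    ‖lam ^ k‖ ^ 2 = (‖lam‖ ^ 2) ^ k := by
  rw [norm_pow, ← pow_mul, ← pow_mul, mul_comm]

private lemma cs_bound (m : ℕ) (c : ℕ → ℂ) (lam : ℂ) :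
    ‖∑ r ∈ range m, c r * lam ^ r‖ ^ 2 ≤
      (∑ r ∈ range m, ‖c r‖ ^ 2) *
        (∑ r ∈ range m, (‖lam‖ ^ 2) ^ r) := by
  have h1 := abs_sum_le' m c lam
  have h2 : (∑ r ∈ range m, ‖c r‖ * ‖lam‖ ^ r) ^ 2 ≤
      (∑ r ∈ range m, ‖c r‖ ^ 2) *
        (∑ r ∈ range m, (‖lam‖ ^ r) ^ 2) :=
    Finset.sum_mul_sq_le_sq_mul_sq _ _ _
  have h3 : (∑ r ∈ range m, (‖lam‖ ^ r) ^ 2) =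
      ∑ r ∈ range m, (‖lam‖ ^ 2) ^ r :=
    Finset.sum_congr rfl fun r _ => by rw [← pow_mul, ← pow_mul, mul_comm]
  calc ‖∑ r ∈ range m, c r * lam ^ r‖ ^ 2
      ≤ (∑ r ∈ range m, ‖c r‖ * ‖lam‖ ^ r) ^ 2 :=
        pow_le_pow_left₀ (norm_nonneg _) h1 2
    _ ≤ _ := h3 ▸ h2

private lemma quad_bound (B A0 T2 X : ℝ) (hA0 : 0 ≤ A0) (hT2 : 0 ≤ T2) (hX : 0 ≤ X)
    (hc1 : 1 + T2 ≤ B) (hc0 : A0 ^ 2 ≤ B)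
    (hprod : (B - 1 - T2) * (B - A0 ^ 2) = A0 ^ 2 * T2) :
    (1 + T2) * X ^ 2 + 2 * A0 * Real.sqrt T2 * X + A0 ^ 2 ≤ B * X ^ 2 + B := by
  have h1 : (0:ℝ) ≤ B - 1 - T2 := by linarith
  have h2 : (0:ℝ) ≤ B - A0 ^ 2 := by linarith
  have e1 : Real.sqrt (B - 1 - T2) ^ 2 = B - 1 - T2 := Real.sq_sqrt h1
  have e2 : Real.sqrt (B - A0 ^ 2) ^ 2 = B - A0 ^ 2 := Real.sq_sqrt h2
  have e3 : Real.sqrt (B - 1 - T2) * Real.sqrt (B - A0 ^ 2) = A0 * Real.sqrt T2 := by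
    rw [← Real.sqrt_mul h1, hprod, Real.sqrt_mul (sq_nonneg A0), Real.sqrt_sq hA0]
  have expand : (Real.sqrt (B - 1 - T2) * X - Real.sqrt (B - A0 ^ 2)) ^ 2 =
      Real.sqrt (B - 1 - T2) ^ 2 * X ^ 2 -
        2 * (Real.sqrt (B - 1 - T2) * Real.sqrt (B - A0 ^ 2)) * X +
        Real.sqrt (B - A0 ^ 2) ^ 2 := by ring
  rw [e1, e2, e3] at expand
  have key : (0:ℝ) ≤ (B - 1 - T2) * X ^ 2 - 2 * (A0 * Real.sqrt T2) * X + (B - A0 ^ 2) := by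
    rw [← expand]; exact sq_nonneg _
  linarith [key]

set_option maxHeartbeats 1000000 in
theorem zero_bound_R8 (n : ℕ) (hn : 2 ≤ n) (a : ℕ → ℂ) (lam : ℂ)
    (h : lam ^ n + ∑ r ∈ range n, a r * lam ^ r = 0) :
    ‖lam‖ ^ 2 ≤
      (3 / 4) * Real.sqrt (1 + ∑ r ∈ range n, (‖a r‖ ^ 2 +
        ‖a (n - 1) * a r - if r = 0 then 0 else a (r - 1)‖ ^ 2)) +
      (1 / 4) * Real.sqrt ((1 / 2) * (1 + (∑ r ∈ range n, ‖a r‖ ^ 2) +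
        Real.sqrt ((1 + ∑ r ∈ range n, ‖a r‖ ^ 2) ^ 2 -
          4 * ‖a 0‖ ^ 2))) ^ 2 := by
  obtain ⟨m, rfl⟩ : ∃ m, n = m + 2 := ⟨n - 2, by omega⟩
  clear hn
  rw [show m + 2 - 1 = m + 1 from rfl]
  set s : ℝ := ‖lam‖ with hs_def
  set t : ℝ := s ^ 2 with ht_def
  have hs0 : 0 ≤ s := norm_nonneg _
  have ht0 : 0 ≤ t := sq_nonneg _
  set S : ℝ := ∑ r ∈ range (m + 2), ‖a r‖ ^ 2 with hS_def
  set A0 : ℝ := ‖a 0‖ with hA0_def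
  set Bs : ℝ := ∑ r ∈ range (m + 2),
      ‖a (m + 1) * a r - if r = 0 then 0 else a (r - 1)‖ ^ 2 with hBs_def
  have hS0 : 0 ≤ S := Finset.sum_nonneg fun r _ => sq_nonneg _
  have hBs0 : 0 ≤ Bs := Finset.sum_nonneg fun r _ => sq_nonneg _
  have hA00 : 0 ≤ A0 := norm_nonneg _
  have hA0S : A0 ^ 2 ≤ S :=
    Finset.single_le_sum (f := fun r => ‖a r‖ ^ 2)
      (fun r _ => sq_nonneg _) (mem_range.mpr (by omega))
  have hDarg : (0:ℝ) ≤ (1 + S) ^ 2 - 4 * A0 ^ 2 := by nlinarith [sq_nonneg (1 - S), hA0S]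
  set D : ℝ := Real.sqrt ((1 + S) ^ 2 - 4 * A0 ^ 2) with hD_def
  have hD0 : 0 ≤ D := Real.sqrt_nonneg _
  have hDsq : D ^ 2 = (1 + S) ^ 2 - 4 * A0 ^ 2 := Real.sq_sqrt hDarg
  set B : ℝ := (1 + S + D) / 2 with hB_def
  have hDa : 1 - S ≤ D := by
    rcases le_or_gt (1 - S) 0 with hc | hc
    · linarith
    · refine le_of_pow_le_pow_left₀ two_ne_zero hD0 ?_
      rw [hDsq]; nlinarith [hA0S]
  have hDb : S - 1 ≤ D := by
    rcases le_or_gt (S - 1) 0 with hc | hc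
    · linarith
    · refine le_of_pow_le_pow_left₀ two_ne_zero hD0 ?_
      rw [hDsq]; nlinarith [hA0S]
  have hDc : 1 + S - 2 * A0 ^ 2 ≤ D := by
    rcases le_or_gt (1 + S - 2 * A0 ^ 2) 0 with hc | hc
    · linarith
    · refine le_of_pow_le_pow_left₀ two_ne_zero hD0 ?_
      rw [hDsq]; nlinarith [hA0S, sq_nonneg A0]
  have hB1 : 1 ≤ B := by rw [hB_def]; linarith
  have hBS : S ≤ B := by rw [hB_def]; linarith
  have hBA0 : A0 ^ 2 ≤ B := le_trans hA0S hBS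
  have hBquad : B ^ 2 = (1 + S) * B - A0 ^ 2 := by
    rw [hB_def]; linear_combination hDsq / 4
  clear_value B D Bs A0 S t s
  -- polynomial relations
  have hsum0 : ∑ r ∈ range (m + 2), a r * lam ^ r = -lam ^ (m + 2) := by
    linear_combination h
  have E1 : ∑ r ∈ range (m + 2), a r * lam ^ (r + 1)
      = (∑ r ∈ range (m + 1), a r * lam ^ (r + 1)) + a (m + 1) * lam ^ (m + 2) :=
    Finset.sum_range_succ _ _
  have E2 : ∑ r ∈ range (m + 2), (if r = 0 then (0:ℂ) else a (r - 1)) * lam ^ r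
      = ∑ r ∈ range (m + 1), a r * lam ^ (r + 1) := by
    rw [Finset.sum_range_succ' (fun r => (if r = 0 then (0:ℂ) else a (r - 1)) * lam ^ r) (m + 1)]
    simp
  have E3 : ∑ r ∈ range (m + 2),
        (a (m + 1) * a r - if r = 0 then (0:ℂ) else a (r - 1)) * lam ^ r
      = a (m + 1) * (∑ r ∈ range (m + 2), a r * lam ^ r)
        - ∑ r ∈ range (m + 2), (if r = 0 then (0:ℂ) else a (r - 1)) * lam ^ r := by
    rw [Finset.mul_sum, ← Finset.sum_sub_distrib]
    exact Finset.sum_congr rfl fun r _ => by ring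
  have E4 : lam * (∑ r ∈ range (m + 2), a r * lam ^ r)
      = ∑ r ∈ range (m + 2), a r * lam ^ (r + 1) := by
    rw [Finset.mul_sum]
    exact Finset.sum_congr rfl fun r _ => by ring
  have hlam_n1 : lam ^ (m + 3) = ∑ r ∈ range (m + 2),
      (a (m + 1) * a r - if r = 0 then (0:ℂ) else a (r - 1)) * lam ^ r := by
    rw [E3, E2]
    have h1' : ∑ r ∈ range (m + 1), a r * lam ^ (r + 1)
        = -lam ^ (m + 3) - a (m + 1) * lam ^ (m + 2) := by
      linear_combination -E1 - E4 + lam * h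
    rw [h1', hsum0]
    ring
  -- Claim 1 : t ≤ √(1 + (S + Bs))
  have claim1 : t ≤ Real.sqrt (1 + (S + Bs)) := by
    rcases le_or_gt t 1 with h1 | h1
    · exact h1.trans (Real.one_le_sqrt.mpr (by linarith))
    · set u : ℝ := ∑ r ∈ range (m + 2), t ^ r with hu_def
      have hu1 : (1:ℝ) ≤ u := by
        have := Finset.single_le_sum (f := fun r => t ^ r)
          (fun r _ => pow_nonneg ht0 r) (mem_range.mpr (show 0 < m + 2 by omega))
        simpa using this
      have h3 : t ^ (m + 2) ≤ S * u := by
        have hc := cs_bound (m + 2) a lam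
        rw [hsum0] at hc
        rw [norm_neg, abs_pow_sq'] at hc
        rw [← hs_def, ← ht_def, ← hS_def, ← hu_def] at hc
        exact hc
      have h4 : t ^ (m + 3) ≤ Bs * u := by
        have hc := cs_bound (m + 2)
          (fun r => a (m + 1) * a r - if r = 0 then (0:ℂ) else a (r - 1)) lam
        rw [← hlam_n1, abs_pow_sq'] at hc
        rw [← hs_def, ← ht_def, ← hBs_def, ← hu_def] at hc
        exact hc
      have hgeom : u * (t - 1) = t ^ (m + 2) - 1 := geom_sum_mul t (m + 2)
      have hsb : t ^ (m + 2) * (t ^ 2 - 1) ≤ (S + Bs) * (t ^ (m + 2) - 1) := by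
        calc t ^ (m + 2) * (t ^ 2 - 1) = (t ^ (m + 3) + t ^ (m + 2)) * (t - 1) := by ring
          _ ≤ ((S + Bs) * u) * (t - 1) := by
              apply mul_le_mul_of_nonneg_right _ (by linarith)
              calc t ^ (m + 3) + t ^ (m + 2) ≤ Bs * u + S * u := add_le_add h4 h3
                _ = (S + Bs) * u := by ring
          _ = (S + Bs) * (u * (t - 1)) := by ring
          _ = (S + Bs) * (t ^ (m + 2) - 1) := by rw [hgeom]
      have htm : (0:ℝ) < t ^ (m + 2) := pow_pos (by linarith) _
      have h5 : (S + Bs) * (t ^ (m + 2) - 1) ≤ (S + Bs) * t ^ (m + 2) :=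
        mul_le_mul_of_nonneg_left (by linarith) (by linarith)
      have h6 : (t ^ 2 - 1) * t ^ (m + 2) ≤ (S + Bs) * t ^ (m + 2) := by
        calc (t ^ 2 - 1) * t ^ (m + 2) = t ^ (m + 2) * (t ^ 2 - 1) := mul_comm _ _
          _ ≤ (S + Bs) * (t ^ (m + 2) - 1) := hsb
          _ ≤ (S + Bs) * t ^ (m + 2) := h5
      have h7 : t ^ 2 - 1 ≤ S + Bs := le_of_mul_le_mul_right h6 htm
      have hkey : t ^ 2 ≤ 1 + (S + Bs) := by linarith
      rw [Real.le_sqrt ht0 (by linarith)]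
      exact hkey
  -- Claim 2 : t ≤ B
  have claim2 : t ≤ B := by
    set T2 : ℝ := ∑ r ∈ range (m + 1), ‖a (r + 1)‖ ^ 2 with hT2_def
    have hT20 : 0 ≤ T2 := Finset.sum_nonneg fun r _ => sq_nonneg _
    have hST : S = A0 ^ 2 + T2 := by
      rw [hS_def, Finset.sum_range_succ' (fun r => ‖a r‖ ^ 2) (m + 1)]
      rw [← hA0_def, ← hT2_def]
      ring
    set R2 : ℝ := ∑ r ∈ range (m + 1), t ^ (r + 1) with hR2_def
    have hR20 : 0 ≤ R2 := Finset.sum_nonneg fun r _ => pow_nonneg ht0 _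
    set X : ℝ := Real.sqrt R2 with hX_def
    have hX0 : 0 ≤ X := Real.sqrt_nonneg _
    have hXsq : X ^ 2 = R2 := Real.sq_sqrt hR20
    clear_value X R2 T2
    have hu2 : ∑ r ∈ range (m + 2), t ^ r = 1 + R2 := by
      rw [Finset.sum_range_succ' (fun r => t ^ r) (m + 1), ← hR2_def]
      norm_num; ring
    have habs : s ^ (m + 2) ≤ A0 + Real.sqrt T2 * X := by
      have h1 : s ^ (m + 2) = ‖∑ r ∈ range (m + 2), a r * lam ^ r‖ := by
        rw [hsum0, norm_neg, norm_pow, ← hs_def]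
      have h2 := abs_sum_le' (m + 2) a lam
      rw [← hs_def] at h2
      have h3 : ∑ r ∈ range (m + 2), ‖a r‖ * s ^ r
          = A0 + ∑ r ∈ range (m + 1), ‖a (r + 1)‖ * s ^ (r + 1) := by
        rw [Finset.sum_range_succ' (fun r => ‖a r‖ * s ^ r) (m + 1), ← hA0_def]
        norm_num; ring
      have h4 : ∑ r ∈ range (m + 1), ‖a (r + 1)‖ * s ^ (r + 1)
          ≤ Real.sqrt T2 * X := by
        have hcs := Finset.sum_mul_sq_le_sq_mul_sq (range (m + 1))
          (fun r => ‖a (r + 1)‖) (fun r => s ^ (r + 1))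
        have hg : (∑ r ∈ range (m + 1), (s ^ (r + 1)) ^ 2) = R2 := by
          rw [hR2_def]
          exact Finset.sum_congr rfl fun r _ => by
            rw [ht_def, ← pow_mul, ← pow_mul, mul_comm]
        rw [hg, ← hT2_def] at hcs
        have hrt : (Real.sqrt T2 * X) ^ 2 = T2 * R2 := by
          rw [mul_pow, Real.sq_sqrt hT20, hXsq]
        have h2' : (∑ r ∈ range (m + 1), ‖a (r + 1)‖ * s ^ (r + 1)) ^ 2
            ≤ (Real.sqrt T2 * X) ^ 2 := by rw [hrt]; exact hcs
        exact le_of_pow_le_pow_left₀ two_ne_zero (by positivity) h2'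
      calc s ^ (m + 2) = ‖∑ r ∈ range (m + 2), a r * lam ^ r‖ := h1
        _ ≤ ∑ r ∈ range (m + 2), ‖a r‖ * s ^ r := h2
        _ = A0 + ∑ r ∈ range (m + 1), ‖a (r + 1)‖ * s ^ (r + 1) := h3
        _ ≤ A0 + Real.sqrt T2 * X := by linarith [h4]
    have htn2 : t ^ (m + 2) ≤ (A0 + Real.sqrt T2 * X) ^ 2 := by
      have : (s ^ (m + 2)) ^ 2 ≤ (A0 + Real.sqrt T2 * X) ^ 2 :=
        pow_le_pow_left₀ (by positivity) habs 2
      calc t ^ (m + 2) = (s ^ (m + 2)) ^ 2 := by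
            rw [ht_def, ← pow_mul, ← pow_mul, mul_comm]
        _ ≤ _ := this
    have htu : t * (1 + R2) = R2 + t ^ (m + 2) := by
      calc t * (1 + R2) = t * ∑ r ∈ range (m + 2), t ^ r := by rw [hu2]
        _ = ∑ r ∈ range (m + 2), t ^ (r + 1) := by
            rw [Finset.mul_sum]; exact Finset.sum_congr rfl fun r _ => by ring
        _ = R2 + t ^ (m + 2) := by
            rw [Finset.sum_range_succ (fun r => t ^ (r + 1)) (m + 1), ← hR2_def]
    have hc1 : 1 + T2 ≤ B := by rw [hB_def]; rw [hST] at hDc ⊢; linarith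
    have hprod : (B - 1 - T2) * (B - A0 ^ 2) = A0 ^ 2 * T2 := by
      linear_combination hBquad + B * hST
    have hquad := quad_bound B A0 T2 X hA00 hT20 hX0 hc1 hBA0 hprod
    have e5 : R2 + (A0 + Real.sqrt T2 * X) ^ 2
        = (1 + T2) * X ^ 2 + 2 * A0 * Real.sqrt T2 * X + A0 ^ 2 := by
      have hT2sq : Real.sqrt T2 ^ 2 = T2 := Real.sq_sqrt hT20
      linear_combination X ^ 2 * hT2sq - hXsq
    have hfinal : t * (1 + R2) ≤ B * (1 + R2) := by
      calc t * (1 + R2) = R2 + t ^ (m + 2) := htu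
        _ ≤ R2 + (A0 + Real.sqrt T2 * X) ^ 2 := by linarith [htn2]
        _ = (1 + T2) * X ^ 2 + 2 * A0 * Real.sqrt T2 * X + A0 ^ 2 := e5
        _ ≤ B * X ^ 2 + B := hquad
        _ = B * (1 + R2) := by rw [← hXsq]; ring
    exact le_of_mul_le_mul_right hfinal (by linarith)
  -- conclusion
  have hsplit : (1:ℝ) + ∑ r ∈ range (m + 2), (‖a r‖ ^ 2 +
      ‖a (m + 1) * a r - if r = 0 then 0 else a (r - 1)‖ ^ 2)
      = 1 + (S + Bs) := by
    rw [Finset.sum_add_distrib, ← hS_def, ← hBs_def]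
  have hBsq : Real.sqrt ((1 / 2) * (1 + S + D)) ^ 2 = B := by
    rw [Real.sq_sqrt (by positivity), hB_def]; ring
  rw [hsplit, hBsq]
  linarith [claim1, claim2]
end

section
/- For the n×n lower shift matrix Lₙ (ones on the subdiagonal, zeros elsewhere), the numerical radius satisfies w(Lₙ) = cos(π/(n+1)). -/
/-- Numerical radius of an `n × n` complex matrix, acting on `ℂⁿ`. -/
noncomputable def matNumRadius {n : ℕ} (M : Matrix (Fin n) (Fin n) ℂ) : ℝ :=
  sSup {y : ℝ | ∃ x : EuclideanSpace ℂ (Fin n), ‖x‖ = 1 ∧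
    y = ‖(inner ℂ (Matrix.toEuclideanCLM (𝕜 := ℂ) M x) x : ℂ)‖}

/-- The `n × n` lower shift matrix: ones on the subdiagonal, zeros elsewhere. -/
def lowerShift (n : ℕ) : Matrix (Fin n) (Fin n) ℂ :=
  fun i j => if (i : ℕ) = (j : ℕ) + 1 then 1 else 0

namespace NumRadiusAux

open Finset Real

noncomputable def sθ (n : ℕ) (k : ℕ) : ℝ := Real.sin (k * (π / (n+1)))

lemma sθ_rec (n : ℕ) (k : ℕ) :
    sθ n k + sθ n (k+2) = 2 * Real.cos (π / (n+1)) * sθ n (k+1) := by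
  unfold sθ
  have h1 : (k:ℝ) * (π / (n+1)) = ((k:ℕ)+1:ℕ) * (π / (n+1)) - (π / (n+1)) := by
    push_cast; ring
  have h2 : ((k+2:ℕ):ℝ) * (π / (n+1)) = ((k+1:ℕ):ℝ) * (π / (n+1)) + (π / (n+1)) := by
    push_cast; ring
  rw [h1, h2, Real.sin_sub, Real.sin_add]; push_cast; ring

lemma sθ_pos (n : ℕ) {k : ℕ} (h1 : 1 ≤ k) (h2 : k ≤ n) : 0 < sθ n k := by
  apply Real.sin_pos_of_pos_of_lt_pi
  · have hp : (0:ℝ) < π / (n+1) := by positivity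
    have : (1:ℝ) ≤ k := by exact_mod_cast h1
    nlinarith
  · have hp : (0:ℝ) < π / (n+1) := by positivity
    have : (k:ℝ) < n + 1 := by exact_mod_cast Nat.lt_succ_of_le h2
    calc (k:ℝ) * (π/(n+1)) < (n+1) * (π/(n+1)) := by nlinarith
      _ = π := by field_simp

lemma sθ_zero (n : ℕ) : sθ n 0 = 0 := by simp [sθ]

lemma sθ_top (n : ℕ) : sθ n (n+1) = 0 := by
  unfold sθ
  have : ((n+1:ℕ):ℝ) * (π / (n+1)) = π := by push_cast; field_simp
  rw [this, Real.sin_pi]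

lemma amgm (a b p q : ℝ) (hp : 0 < p) (hq : 0 < q) :
    a * b ≤ a^2 * q / (2*p) + b^2 * p / (2*q) := by
  rw [div_add_div _ _ (by positivity) (by positivity), le_div_iff₀ (by positivity)]
  nlinarith [sq_nonneg (q*a - p*b), mul_pos hp hq]

lemma key_ineq (n : ℕ) (hn : 0 < n) (a : ℕ → ℝ) :
    ∑ i ∈ range (n-1), a i * a (i+1)
      ≤ Real.cos (π/(n+1)) * ∑ i ∈ range n, (a i)^2 := by
  obtain ⟨m, rfl⟩ : ∃ m, n = m + 1 := ⟨n - 1, (Nat.succ_pred_eq_of_pos hn).symm⟩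
  set c := Real.cos (π/(m+1+1)) with hc
  set f : ℕ → ℝ := fun k => (a k)^2 * sθ (m+1) (k+2) / (2 * sθ (m+1) (k+1)) with hf
  set g : ℕ → ℝ := fun k => (a k)^2 * sθ (m+1) k / (2 * sθ (m+1) (k+1)) with hg
  have hstep : ∀ i ∈ range m, a i * a (i+1) ≤ f i + g (i+1) := by
    intro i hi
    rw [mem_range] at hi
    have hp := sθ_pos (m+1) (k := i+1) (by omega) (by omega)
    have hq := sθ_pos (m+1) (k := i+2) (by omega) (by omega)
    simpa [hf, hg] using amgm (a i) (a (i+1)) (sθ (m+1) (i+1)) (sθ (m+1) (i+2)) hp hq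
  have hsum : ∑ i ∈ range m, (f i + g (i+1)) = ∑ i ∈ range (m+1), (f i + g i) := by
    rw [sum_add_distrib]
    have h1 : ∑ i ∈ range (m+1), f i = ∑ i ∈ range m, f i := by
      rw [sum_range_succ]
      have : f m = 0 := by simp [hf, sθ_top]
      rw [this, add_zero]
    have h2 : ∑ i ∈ range (m+1), g i = ∑ i ∈ range m, g (i+1) := by
      rw [sum_range_succ']
      have : g 0 = 0 := by simp [hg, sθ_zero]
      rw [this, add_zero]
    rw [sum_add_distrib, h1, h2]
  have hfg : ∀ i ∈ range (m+1), f i + g i = c * (a i)^2 := by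
    intro i hi
    rw [mem_range] at hi
    have hp := sθ_pos (m+1) (k := i+1) (by omega) (by omega)
    have hrec := sθ_rec (m+1) i
    rw [hf, hg]
    field_simp
    push_cast at hrec
    nlinarith [hrec]
  calc ∑ i ∈ range m, a i * a (i+1) ≤ ∑ i ∈ range m, (f i + g (i+1)) := sum_le_sum hstep
    _ = ∑ i ∈ range (m+1), (f i + g i) := hsum
    _ = ∑ i ∈ range (m+1), c * (a i)^2 := sum_congr rfl hfg
    _ = c * ∑ i ∈ range (m+1), (a i)^2 := by rw [mul_sum]
    _ = _ := by norm_num [hc]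

lemma key_eq (n : ℕ) (hn : 0 < n) :
    ∑ i ∈ range (n-1), sθ n (i+1) * sθ n (i+2)
      = Real.cos (π/(n+1)) * ∑ i ∈ range n, (sθ n (i+1))^2 := by
  obtain ⟨m, rfl⟩ : ∃ m, n = m + 1 := ⟨n - 1, (Nat.succ_pred_eq_of_pos hn).symm⟩
  set s := sθ (m+1) with hs
  have hrec : ∀ k, s k * s (k+1) + s (k+1) * s (k+2)
      = 2 * Real.cos (π/(m+1+1)) * (s (k+1))^2 := by
    intro k
    have := sθ_rec (m+1) k
    push_cast at this
    simp only [hs]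
    linear_combination sθ (m+1) (k+1) * this
  have h1 : ∑ k ∈ range (m+1), s k * s (k+1) = ∑ i ∈ range m, s (i+1) * s (i+2) := by
    rw [sum_range_succ']
    simp [hs, sθ_zero]
  have h2 : ∑ k ∈ range (m+1), s (k+1) * s (k+2) = ∑ i ∈ range m, s (i+1) * s (i+2) := by
    rw [sum_range_succ]
    have : s (m+1) * s (m+2) = 0 := by
      have : s (m+2) = 0 := sθ_top (m+1)
      rw [this, mul_zero]
    rw [this, add_zero]
  have htot : ∑ k ∈ range (m+1), (s k * s (k+1) + s (k+1) * s (k+2))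
      = 2 * Real.cos (π/(m+1+1)) * ∑ k ∈ range (m+1), (s (k+1))^2 := by
    rw [sum_congr rfl (fun k _ => hrec k), ← mul_sum]
  rw [sum_add_distrib, h1, h2] at htot
  have : (m+1:ℕ) - 1 = m := by omega
  rw [this]
  push_cast at htot ⊢
  linarith

noncomputable def ext {n : ℕ} (x : Fin n → ℂ) : ℕ → ℂ :=
  fun k => if h : k < n then x ⟨k, h⟩ else 0

lemma ext_lt {n : ℕ} (x : Fin n → ℂ) (k : ℕ) (h : k < n) :
    ext x k = x ⟨k, h⟩ := dif_pos h

lemma ext_fin {n : ℕ} (x : Fin n → ℂ) (i : Fin n) : ext x i = x i := by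
  rw [ext_lt x i i.isLt]

lemma mulVec_lowerShift {n : ℕ} (x : Fin n → ℂ) (i : Fin n) :
    (lowerShift n).mulVec x i = if i.val = 0 then 0 else ext x (i.val - 1) := by
  rcases Nat.eq_zero_or_pos i.val with h0 | h0
  · simp only [h0, if_pos]
    rw [Matrix.mulVec, dotProduct]
    apply Finset.sum_eq_zero
    intro j _
    simp [lowerShift, h0]
  · rw [if_neg (by omega)]
    have hlt : i.val - 1 < n := by omega
    rw [ext_lt x _ hlt, Matrix.mulVec, dotProduct]
    rw [Finset.sum_eq_single (⟨i.val - 1, hlt⟩ : Fin n)]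
    · show (if (i:ℕ) = (i:ℕ) - 1 + 1 then (1:ℂ) else 0) * x _ = x _
      rw [if_pos (by omega), one_mul]
    · intro j _ hj
      simp only [lowerShift]
      rw [if_neg, zero_mul]
      intro hc
      apply hj
      apply Fin.ext
      simp; omega
    · intro h; exact absurd (Finset.mem_univ _) h

lemma inner_lowerShift {n : ℕ} (hn : 0 < n) (x : EuclideanSpace ℂ (Fin n)) :
    (inner ℂ (Matrix.toEuclideanCLM (𝕜 := ℂ) (lowerShift n) x) x : ℂ)
      = ∑ i ∈ range (n-1), (starRingEnd ℂ) (ext x i) * ext x (i+1) := by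
  obtain ⟨m, rfl⟩ : ∃ m, n = m + 1 := ⟨n - 1, (Nat.succ_pred_eq_of_pos hn).symm⟩
  have hclm : ∀ i : Fin (m+1), (Matrix.toEuclideanCLM (𝕜 := ℂ) (lowerShift (m+1)) x) i
      = (lowerShift (m+1)).mulVec x i := fun i => rfl
  rw [PiLp.inner_apply]
  simp only [RCLike.inner_apply', hclm, mulVec_lowerShift]
  simp only [← ext_fin x]
  rw [Fin.sum_univ_eq_sum_range
    (fun k => (starRingEnd ℂ) (if k = 0 then 0 else ext x (k-1)) * ext x k)]
  rw [Finset.sum_range_succ']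
  simp only [if_pos rfl, map_zero, zero_mul, add_zero, Nat.add_sub_cancel]
  norm_num

lemma norm_sq_sum {n : ℕ} (x : EuclideanSpace ℂ (Fin n)) (hx : ‖x‖ = 1) :
    ∑ k ∈ range n, ‖ext x k‖^2 = 1 := by
  have h := EuclideanSpace.norm_eq x
  rw [hx] at h
  rw [eq_comm, Real.sqrt_eq_one] at h
  have h2 : ∑ i : Fin n, ‖x i‖^2 = 1 := h
  rw [← h2, ← Fin.sum_univ_eq_sum_range (fun k => ‖ext x k‖ ^ 2)]
  exact Finset.sum_congr rfl fun i _ => by rw [ext_fin]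

end NumRadiusAux

open Finset Real NumRadiusAux in
theorem numRadius_lowerShift (n : ℕ) (hn : 0 < n) :
    matNumRadius (lowerShift n) = Real.cos (Real.pi / (n + 1)) := by
  set c := Real.cos (π / (n + 1)) with hcdef
  have hc0 : 0 ≤ c := by
    apply Real.cos_nonneg_of_mem_Icc
    constructor
    · have : (0:ℝ) ≤ π / (n+1) := by positivity
      linarith [Real.pi_pos]
    · rw [div_le_div_iff₀ (by positivity) (by norm_num)]
      have : (1:ℝ) ≤ n := by exact_mod_cast hn
      nlinarith [Real.pi_pos]
  set S := {y : ℝ | ∃ x : EuclideanSpace ℂ (Fin n), ‖x‖ = 1 ∧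
    y = ‖(inner ℂ (Matrix.toEuclideanCLM (𝕜 := ℂ) (lowerShift n) x) x : ℂ)‖} with hS
  -- upper bound
  have hub : ∀ y ∈ S, y ≤ c := by
    rintro y ⟨x, hx, rfl⟩
    rw [inner_lowerShift hn x]
    set a : ℕ → ℝ := fun k => ‖ext x k‖ with ha
    calc ‖(∑ i ∈ range (n-1), (starRingEnd ℂ) (ext x i) * ext x (i+1))‖
        ≤ ∑ i ∈ range (n-1), a i * a (i+1) := by
          refine (norm_sum_le _ _).trans (le_of_eq ?_)
          exact Finset.sum_congr rfl fun i _ => by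
            rw [norm_mul, Complex.norm_conj]
      _ ≤ c * ∑ i ∈ range n, (a i)^2 := key_ineq n hn a
      _ = c := by rw [norm_sq_sum x hx, mul_one]
  -- witness attaining the value
  have hQ : 0 < ∑ i ∈ range n, (sθ n (i+1))^2 := by
    apply Finset.sum_pos
    · intro i hi
      rw [mem_range] at hi
      have := sθ_pos n (k := i+1) (by omega) (by omega)
      positivity
    · exact ⟨0, mem_range.mpr hn⟩
  set ν := Real.sqrt (∑ i ∈ range n, (sθ n (i+1))^2) with hν
  have hν0 : 0 < ν := Real.sqrt_pos.mpr hQ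
  have hν2 : ν^2 = ∑ i ∈ range n, (sθ n (i+1))^2 := Real.sq_sqrt hQ.le
  set v : EuclideanSpace ℂ (Fin n) := WithLp.toLp 2 (fun i : Fin n => ((sθ n (i+1) / ν : ℝ) : ℂ)) with hv
  have hvnorm : ‖v‖ = 1 := by
    rw [EuclideanSpace.norm_eq]
    rw [Fin.sum_univ_eq_sum_range (fun k => ‖((sθ n (k+1) / ν : ℝ) : ℂ)‖^2)]
    have : ∑ k ∈ range n, ‖((sθ n (k+1) / ν : ℝ) : ℂ)‖^2 = 1 := by
      have heach : ∀ k, ‖((sθ n (k+1) / ν : ℝ) : ℂ)‖^2 = (sθ n (k+1))^2 / ν^2 := by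
        intro k
        rw [Complex.norm_real, Real.norm_eq_abs, sq_abs, div_pow]
      rw [Finset.sum_congr rfl fun k _ => heach k, ← Finset.sum_div, ← hν2]
      field_simp
    rw [this, Real.sqrt_one]
  have hext : ∀ k (h : k < n), ext v k = ((sθ n (k+1) / ν : ℝ) : ℂ) := by
    intro k h
    rw [ext_lt v k h]
  have hval : ‖(inner ℂ (Matrix.toEuclideanCLM (𝕜 := ℂ) (lowerShift n) v) v : ℂ)‖ = c := by
    rw [inner_lowerShift hn v]
    have hterms : ∑ i ∈ range (n-1), (starRingEnd ℂ) (ext v i) * ext v (i+1)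
        = ((∑ i ∈ range (n-1), (sθ n (i+1) / ν) * (sθ n (i+2) / ν) : ℝ) : ℂ) := by
      rw [Complex.ofReal_sum]
      apply Finset.sum_congr rfl
      intro i hi
      rw [mem_range] at hi
      rw [hext i (by omega), hext (i+1) (by omega), Complex.conj_ofReal,
        ← Complex.ofReal_mul]
    have hreal : ∑ i ∈ range (n-1), (sθ n (i+1) / ν) * (sθ n (i+2) / ν) = c := by
      have : ∑ i ∈ range (n-1), (sθ n (i+1) / ν) * (sθ n (i+2) / ν)
          = (∑ i ∈ range (n-1), sθ n (i+1) * sθ n (i+2)) / ν^2 := by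
        rw [Finset.sum_div]
        apply Finset.sum_congr rfl
        intro i _
        rw [div_mul_div_comm, ← pow_two]
      rw [this, key_eq n hn, ← hν2, hcdef]
      field_simp
    rw [hterms, hreal, Complex.norm_real, Real.norm_eq_abs, abs_of_nonneg hc0]
  have hmem : c ∈ S := ⟨v, hvnorm, hval.symm⟩
  have : matNumRadius (lowerShift n) = sSup S := rfl
  rw [this]
  exact le_antisymm (csSup_le ⟨c, hmem⟩ hub) (le_csSup ⟨c, fun y hy => hub y hy⟩ hmem)
end

section
/- For the n×n matrix A whose first row is (x₁, x₂, …, xₙ) and all other rows zero, the numerical radius equals (1/2)(|x₁| + √(Σ_{r=1}^{n}|x_r|²)). -/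
open Finset

lemma key_ineq_s18 (a b t w R : ℝ) (ha : 0 ≤ a) (hb : 0 ≤ b) (ht : 0 ≤ t) (hw : 0 ≤ w)
    (htw : t ^ 2 + w ^ 2 = 1) (hR : 0 ≤ R) (hR2 : R ^ 2 = a ^ 2 + b ^ 2) :
    t * (a * t + b * w) ≤ (a + R) / 2 := by
  have e : (a ^ 2 + b ^ 2) - (a * (t ^ 2 - w ^ 2) + 2 * b * t * w) ^ 2
      = (2 * a * t * w - b * (t ^ 2 - w ^ 2)) ^ 2 := by
    linear_combination (-(a ^ 2 + b ^ 2) * (1 + t ^ 2 + w ^ 2)) * htw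
  have hL : (a * (t ^ 2 - w ^ 2) + 2 * b * t * w) ^ 2 ≤ R ^ 2 := by
    nlinarith [e, sq_nonneg (2 * a * t * w - b * (t ^ 2 - w ^ 2))]
  have hLR : a * (t ^ 2 - w ^ 2) + 2 * b * t * w ≤ R := by nlinarith [hL]
  nlinarith [hLR]

set_option maxHeartbeats 2000000 in
theorem numRadius_first_row (n : ℕ) (hn : 0 < n) (x : Fin n → ℂ)
    (A : Matrix (Fin n) (Fin n) ℂ)
    (hA : ∀ i j, A i j = if (i : ℕ) = 0 then x j else 0) :
    matNumRadius A = (1 / 2) * (‖x ⟨0, hn⟩‖ +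
      Real.sqrt (∑ r : Fin n, ‖x r‖ ^ 2)) := by
  classical
  set z : Fin n := ⟨0, hn⟩ with hz
  set a : ℝ := ‖x z‖ with ha
  set R : ℝ := Real.sqrt (∑ r : Fin n, ‖x r‖ ^ 2) with hRdef
  have ha0 : 0 ≤ a := norm_nonneg _
  have hsum_nonneg : (0:ℝ) ≤ ∑ r : Fin n, ‖x r‖ ^ 2 :=
    Finset.sum_nonneg fun _ _ => sq_nonneg _
  have hR0 : 0 ≤ R := Real.sqrt_nonneg _
  have hR2 : R ^ 2 = ∑ r : Fin n, ‖x r‖ ^ 2 := Real.sq_sqrt hsum_nonneg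
  -- splitting sums at z
  have hsplit : ∀ (f : Fin n → ℝ), ∑ r : Fin n, f r = f z + ∑ r ∈ univ.erase z, f r :=
    fun f => (Finset.add_sum_erase _ f (mem_univ z)).symm
  have hb2 : ∑ r ∈ univ.erase z, ‖x r‖ ^ 2 = R ^ 2 - a ^ 2 := by
    rw [hR2, hsplit (fun r => ‖x r‖ ^ 2)]; ring
  have haR : a ≤ R := by
    nlinarith [Finset.sum_nonneg (fun r (_ : r ∈ univ.erase z) =>
      sq_nonneg (‖x r‖))]
  set b : ℝ := Real.sqrt (R ^ 2 - a ^ 2) with hbdef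
  have hb0 : 0 ≤ b := Real.sqrt_nonneg _
  have hbsq : b ^ 2 = R ^ 2 - a ^ 2 := Real.sq_sqrt (by nlinarith)
  -- the value formula
  have hval : ∀ v : EuclideanSpace ℂ (Fin n),
      ‖(inner ℂ (Matrix.toEuclideanCLM (𝕜 := ℂ) A v) v : ℂ)‖
        = ‖∑ j, x j * v j‖ * ‖v z‖ := by
    intro v
    have h1 : (inner ℂ (Matrix.toEuclideanCLM (𝕜 := ℂ) A v) v : ℂ)
        = ∑ i, (starRingEnd ℂ) (A.mulVec v i) * v i := by
      rw [PiLp.inner_apply]; simp only [RCLike.inner_apply', Matrix.ofLp_toEuclideanCLM]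
    have h2 : ∀ i, A.mulVec v i = if (i : ℕ) = 0 then ∑ j, x j * v j else 0 := by
      intro i
      simp only [Matrix.mulVec, dotProduct, hA]
      by_cases hi : (i : ℕ) = 0 <;> simp [hi]
    rw [h1]
    have h3 : ∑ i, (starRingEnd ℂ) (A.mulVec v i) * v i
        = (starRingEnd ℂ) (∑ j, x j * v j) * v z := by
      rw [Finset.sum_eq_single z]
      · rw [h2]; simp [hz]
      · intro i _ hiz
        have : (i : ℕ) ≠ 0 := fun h => hiz (Fin.ext h)
        rw [h2]; simp [this]
      · simp
    rw [h3, norm_mul, Complex.norm_conj]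
  -- norm formula
  have hnorm : ∀ v : EuclideanSpace ℂ (Fin n), ‖v‖ = 1 →
      ∑ i, ‖v i‖ ^ 2 = 1 := by
    intro v hv
    have h1 : Real.sqrt (∑ i, ‖v i‖ ^ 2) = 1 := (EuclideanSpace.norm_eq v) ▸ hv
    rw [Real.sqrt_eq_one] at h1
    simpa using h1
  -- upper bound
  have hub : ∀ v : EuclideanSpace ℂ (Fin n), ‖v‖ = 1 →
      ‖∑ j, x j * v j‖ * ‖v z‖ ≤ (a + R) / 2 := by
    intro v hv
    set t : ℝ := ‖v z‖ with htdef
    have ht0 : 0 ≤ t := norm_nonneg _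
    set w : ℝ := Real.sqrt (∑ r ∈ univ.erase z, ‖v r‖ ^ 2) with hwdef
    have hw0 : 0 ≤ w := Real.sqrt_nonneg _
    have herase_nonneg : (0:ℝ) ≤ ∑ r ∈ univ.erase z, ‖v r‖ ^ 2 :=
      Finset.sum_nonneg fun _ _ => sq_nonneg _
    have hwsq : w ^ 2 = ∑ r ∈ univ.erase z, ‖v r‖ ^ 2 :=
      Real.sq_sqrt herase_nonneg
    have htw : t ^ 2 + w ^ 2 = 1 := by
      have h1 := hnorm v hv
      rw [hsplit (fun r => ‖v r‖ ^ 2)] at h1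
      rw [hwsq]; exact h1
    have hs : ‖∑ j, x j * v j‖ ≤ a * t + b * w := by
      have h1 : ∑ j, x j * v j = x z * v z + ∑ j ∈ univ.erase z, x j * v j :=
        (Finset.add_sum_erase _ _ (mem_univ z)).symm
      rw [h1]
      refine le_trans (norm_add_le _ _) ?_
      have h2 : ‖x z * v z‖ = a * t := by rw [norm_mul]
      have h3 : ‖∑ j ∈ univ.erase z, x j * v j‖ ≤ b * w := by
        refine le_trans (norm_sum_le _ _) ?_
        have csq := Finset.sum_mul_sq_le_sq_mul_sq (univ.erase z)
          (fun j => ‖x j‖) (fun j => ‖v j‖)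
        simp only at csq
        rw [hb2, ← hwsq, ← hbsq] at csq
        have hpos : (0:ℝ) ≤ ∑ j ∈ univ.erase z, ‖x j‖ * ‖v j‖ :=
          Finset.sum_nonneg fun _ _ => mul_nonneg (norm_nonneg _) (norm_nonneg _)
        have hbw : 0 ≤ b * w := mul_nonneg hb0 hw0
        have := csq
        simp only [norm_mul]
        nlinarith [csq, hpos, hbw]
      linarith
    calc ‖∑ j, x j * v j‖ * ‖v z‖ ≤ (a * t + b * w) * t :=
          mul_le_mul_of_nonneg_right hs ht0
      _ = t * (a * t + b * w) := by ring
      _ ≤ (a + R) / 2 := key_ineq_s18 a b t w R ha0 hb0 ht0 hw0 htw hR0 (by rw [hbsq]; nlinarith)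
  unfold matNumRadius
  set S : Set ℝ := {y : ℝ | ∃ v : EuclideanSpace ℂ (Fin n), ‖v‖ = 1 ∧
    y = ‖(inner ℂ (Matrix.toEuclideanCLM (𝕜 := ℂ) A v) v : ℂ)‖} with hSdef
  have hSub : ∀ y ∈ S, y ≤ (a + R) / 2 := by
    rintro y ⟨v, hv, rfl⟩
    rw [hval v]
    exact hub v hv
  have hbdd : BddAbove S := ⟨(a + R) / 2, fun y hy => hSub y hy⟩
  rcases eq_or_lt_of_le hR0 with hR0' | hRpos
  · -- R = 0, all x vanish
    have hsum0 : ∑ r : Fin n, ‖x r‖ ^ 2 = 0 := by rw [← hR2, ← hR0']; ring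
    have hx0 : ∀ r : Fin n, x r = 0 := by
      intro r
      have h1 := (Finset.sum_eq_zero_iff_of_nonneg
        (fun i (_ : i ∈ univ) => sq_nonneg (‖x i‖))).mp hsum0 r (mem_univ r)
      have : ‖x r‖ = 0 := by nlinarith [norm_nonneg (x r)]
      exact norm_eq_zero.mp this
    have ha0' : a = 0 := by rw [ha, hx0 z]; simp
    have hS0 : S = {0} := by
      ext y
      constructor
      · rintro ⟨v, hv, rfl⟩
        rw [hval v]
        simp [hx0]
      · rintro rfl
        refine ⟨EuclideanSpace.single z 1, by simp, ?_⟩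
        rw [hval (EuclideanSpace.single z 1)]
        simp [hx0]
    rw [hS0, csSup_singleton, ha0', ← hR0']
    ring
  · -- R > 0: construct the optimal vector
    set t : ℝ := Real.sqrt ((R + a) / (2 * R)) with htdef
    set u : ℝ := Real.sqrt ((R - a) / (2 * R)) with hudef
    have ht0 : 0 ≤ t := Real.sqrt_nonneg _
    have hu0 : 0 ≤ u := Real.sqrt_nonneg _
    have ht2 : t ^ 2 = (R + a) / (2 * R) :=
      Real.sq_sqrt (div_nonneg (by linarith) (by linarith))
    have hu2 : u ^ 2 = (R - a) / (2 * R) :=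
      Real.sq_sqrt (div_nonneg (by linarith) (by linarith))
    set φ : ℂ := if x z = 0 then 1 else x z / (a : ℂ) with hφdef
    have hφabs : ‖φ‖ = 1 := by
      by_cases h : x z = 0
      · simp [hφdef, h]
      · have ha' : a ≠ 0 := by
          rw [ha]
          exact norm_ne_zero_iff.mpr h
        rw [hφdef, if_neg h, norm_div, ← ha, Complex.norm_of_nonneg ha0]
        field_simp
    have hxzφ : x z = φ * (a : ℂ) := by
      by_cases h : x z = 0
      · have : a = 0 := by rw [ha, h]; simp
        rw [h, this]
        simp
      · have ha' : (a : ℂ) ≠ 0 := by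
          simp only [ne_eq, Complex.ofReal_eq_zero]
          rw [ha]
          exact norm_ne_zero_iff.mpr h
        rw [hφdef, if_neg h]
        field_simp
    have hbu : b = 0 → u = 0 := by
      intro h
      have h2 : R ^ 2 = a ^ 2 := by
        have := hbsq
        rw [h] at this
        linarith [this]
      have hra : R = a := by
        rw [← Real.sqrt_sq hR0, ← Real.sqrt_sq ha0, h2]
      rw [hudef, hra]
      simp
    set c : ℝ := u / b with hcdef
    have hc0 : 0 ≤ c := div_nonneg hu0 hb0
    have hcb2 : c ^ 2 * b ^ 2 = u ^ 2 := by
      by_cases hb' : b = 0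
      · rw [hb', hbu hb']; ring
      · rw [hcdef, div_pow, div_mul_cancel₀ _ (pow_ne_zero 2 hb')]
    have hcbb : c * b ^ 2 = u * b := by
      by_cases hb' : b = 0
      · rw [hb', hbu hb']; ring
      · rw [hcdef, div_mul_eq_mul_div, div_eq_iff hb']; ring
    have h2R : (2 * R) ≠ 0 := ne_of_gt (by linarith)
    set v : EuclideanSpace ℂ (Fin n) :=
      WithLp.toLp 2 (fun j => if j = z then (t : ℂ) else φ * (c : ℂ) * (starRingEnd ℂ) (x j)) with hvdef
    have hvz : v z = (t : ℂ) := by rw [hvdef, PiLp.toLp_apply]; exact if_pos rfl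
    have htu1 : t ^ 2 + u ^ 2 = 1 := by
      rw [ht2, hu2, ← add_div, div_eq_one_iff_eq h2R]
      ring
    have hnv : ‖v‖ = 1 := by
      rw [EuclideanSpace.norm_eq]
      have hsum : ∑ i, ‖v i‖ ^ 2 = 1 := by
        rw [hsplit (fun i => ‖v i‖ ^ 2)]
        have h1 : ‖v z‖ ^ 2 = t ^ 2 := by
          rw [hvz]
          simp [Complex.norm_real, abs_of_nonneg ht0]
        have h2 : ∑ j ∈ univ.erase z, ‖v j‖ ^ 2 = c ^ 2 * (R ^ 2 - a ^ 2) := by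
          rw [← hb2, Finset.mul_sum]
          refine Finset.sum_congr rfl fun j hj => ?_
          have hjz : j ≠ z := Finset.ne_of_mem_erase hj
          simp only [hvdef, PiLp.toLp_apply, if_neg hjz, norm_mul, Complex.norm_conj,
            Complex.norm_real, Real.norm_eq_abs, hφabs, abs_of_nonneg hc0]
          ring
        rw [h1, h2, ← hbsq, hcb2, htu1]
      rw [hsum, Real.sqrt_one]
    have hsv : ∑ j, x j * v j = φ * ((a * t + u * b : ℝ) : ℂ) := by
      rw [← Finset.add_sum_erase _ _ (mem_univ z)]
      have e2 : ∑ j ∈ univ.erase z, x j * v j = φ * (c : ℂ) * ((R ^ 2 - a ^ 2 : ℝ) : ℂ) := by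
        have : ∀ j ∈ univ.erase z, x j * v j
            = φ * (c : ℂ) * ((‖x j‖ ^ 2 : ℝ) : ℂ) := by
          intro j hj
          have hjz : j ≠ z := Finset.ne_of_mem_erase hj
          rw [hvdef]
          simp only [PiLp.toLp_apply, if_neg hjz]
          rw [mul_comm (x j), mul_assoc, mul_comm ((starRingEnd ℂ) (x j)) (x j),
            Complex.mul_conj', Complex.ofReal_pow]
        rw [Finset.sum_congr rfl this, ← Finset.mul_sum, ← Complex.ofReal_sum, hb2]
      rw [e2, hvz, hxzφ, ← hbsq]
      push_cast
      have : (c : ℂ) * (b : ℂ) ^ 2 = (u : ℂ) * (b : ℂ) := by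
        exact_mod_cast congrArg (Complex.ofReal) hcbb
      linear_combination φ * this
    have htu : t * u = b / (2 * R) := by
      rw [htdef, hudef, ← Real.sqrt_mul (div_nonneg (by linarith) (by linarith))]
      have e : (R + a) / (2 * R) * ((R - a) / (2 * R)) = (R ^ 2 - a ^ 2) / (2 * R) ^ 2 := by
        field_simp
        ring
      rw [e, Real.sqrt_div (by nlinarith : (0:ℝ) ≤ R ^ 2 - a ^ 2),
        Real.sqrt_sq (by linarith : (0:ℝ) ≤ 2 * R), ← hbdef]
    have hmem : (a + R) / 2 ∈ S := by
      refine ⟨v, hnv, ?_⟩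
      rw [hval v, hsv, hvz, norm_mul, hφabs, one_mul,
        Complex.norm_of_nonneg (add_nonneg (mul_nonneg ha0 ht0) (mul_nonneg hu0 hb0)), Complex.norm_of_nonneg ht0]
      have : (a * t + u * b) * t = a * t ^ 2 + b * (t * u) := by ring
      rw [this, ht2, htu]
      have e4 : a * ((R + a) / (2 * R)) + b * (b / (2 * R))
          = (a * (R + a) + b ^ 2) / (2 * R) := by ring
      rw [e4, hbsq, div_eq_div_iff two_ne_zero h2R]
      ring
    have h1 : sSup S ≤ (a + R) / 2 := csSup_le ⟨_, hmem⟩ hSub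
    have h2 : (a + R) / 2 ≤ sSup S := le_csSup hbdd hmem
    rw [le_antisymm h1 h2]
    ring
end
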